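/- arXiv:1810.02853 — 5 statements merged into one kernel-verified Lean document; each statement's English description precedes it below -/
import Mathlib

section
/- Let [a,b] be a compact interval and f : [a,b] → ℝ a continuously differentiable function. Then its convex envelope f** is also continuously differentiable on [a,b]. -/
open Set MeasureTheory Filter Topology

/-- The convex envelope (convexification) of `f` on `[a,b]`:
`f**(x) = inf {(1-λ) f x₀ + λ f x₁ : λ ∈ [0,1], x₀, x₁ ∈ [a,b], (1-λ) x₀ + λ x₁ = x}`. -/
noncomputable def convEnv (a b : ℝ) (f : ℝ → ℝ) : ℝ → ℝ := fun x =>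
  sInf {y : ℝ | ∃ lam x₀ x₁ : ℝ, lam ∈ Set.Icc (0:ℝ) 1 ∧ x₀ ∈ Set.Icc a b ∧
    x₁ ∈ Set.Icc a b ∧ (1 - lam) * x₀ + lam * x₁ = x ∧
    y = (1 - lam) * f x₀ + lam * f x₁}

/-!
On a line, a convex combination of three values of `f` dominates a two-point combination at the
same point; this makes `g = f**` convex. By compactness every value `g x` is attained, so either
`g x = f x` or `g x` lies on a chord of `f` over some `[p, q]` with `p < x < q`, and `g` stays
below that chord on `[p, q]`. Either way the convex function `g` touches from below a function
differentiable at `x`, which squeezes its left and right derivatives together. At the endpoints,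
`f` is Lipschitz, so `g` has affine minorants through `(a, f a)` and `(b, f b)` and its one-sided
slopes are bounded. Finally, the derivative of a differentiable convex function is monotone and,
by Darboux, has the intermediate value property, hence is continuous.
-/

open scoped NNReal

section

variable {α β : Type*} [LinearOrder α] [TopologicalSpace α] [OrderTopology α]
  [LinearOrder β] [DenselyOrdered β] {φ : α → β} {s : Set α} {x : α}

lemma MonotoneOn.eventually_lt_of_ordConnected_image (hφ : MonotoneOn φ s)
    (himg : (φ '' s).OrdConnected) (hx : x ∈ s) {c : β} (hc : c < φ x) :
    ∀ᶠ y in 𝓝[s] x, c < φ y := by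
  by_cases h : ∃ y ∈ s, y < x ∧ c < φ y
  · obtain ⟨y₀, hy₀, hy₀x, hcy₀⟩ := h
    filter_upwards [self_mem_nhdsWithin, mem_nhdsWithin_of_mem_nhds (Ioi_mem_nhds hy₀x)]
      with y hy hy₀y
    exact hcy₀.trans_le (hφ hy₀ hy (le_of_lt hy₀y))
  push Not at h
  have hmin : ∀ y ∈ s, x ≤ y := by
    intro y hy
    by_contra! hyx
    obtain ⟨m, hcm, hmx⟩ := exists_between hc
    obtain ⟨z, hz, hzm⟩ := himg.out (mem_image_of_mem φ hy) (mem_image_of_mem φ hx)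
      ⟨(h y hy hyx).trans hcm.le, hmx.le⟩
    rcases lt_or_ge z x with hzx | hxz
    · exact (h z hz hzx).not_gt (hzm ▸ hcm)
    · exact (hφ hx hz hxz).not_gt (hzm ▸ hmx)
  filter_upwards [self_mem_nhdsWithin] with y hy using hc.trans_le (hφ hx hy (hmin y hy))

lemma MonotoneOn.continuousOn_of_ordConnected_image [TopologicalSpace β] [OrderTopology β]
    (hφ : MonotoneOn φ s) (himg : (φ '' s).OrdConnected) : ContinuousOn φ s := fun _ hx =>
  tendsto_order.2 ⟨fun _ hc => hφ.eventually_lt_of_ordConnected_image himg hx hc,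
    fun _ hc => hφ.dual.eventually_lt_of_ordConnected_image (α := αᵒᵈ) (β := βᵒᵈ) himg.dual hx hc⟩

end

namespace ConvexOn

variable {S : Set ℝ} {g f : ℝ → ℝ} {x d : ℝ}

lemma hasDerivAt_of_le_of_eq (hg : ConvexOn ℝ S g) (hx : x ∈ interior S)
    (hle : ∀ y ∈ S, g y ≤ f y) (heq : g x = f x) (hf : HasDerivAt f d x) :
    HasDerivAt g d x := by
  have hxS : S ∈ 𝓝 x := mem_interior_iff_mem_nhds.1 hx
  have hR := (hasDerivWithinAt_iff_tendsto_slope' self_notMem_Ioi).1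
    (hg.hasDerivWithinAt_rightDeriv_of_mem_interior hx)
  have hL := (hasDerivWithinAt_iff_tendsto_slope' self_notMem_Iio).1
    (hg.hasDerivWithinAt_leftDeriv_of_mem_interior hx)
  obtain ⟨hfL, hfR⟩ := hasDerivAt_iff_tendsto_slope_left_right.1 hf
  have hright : derivWithin g (Ioi x) x ≤ d := by
    refine le_of_tendsto_of_tendsto hR hfR ?_
    filter_upwards [self_mem_nhdsWithin, mem_nhdsWithin_of_mem_nhds hxS] with y hxy hy
    rw [slope_def_field, slope_def_field, div_le_div_iff_of_pos_right (sub_pos.2 hxy), heq]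
    linarith [hle y hy]
  have hleft : d ≤ derivWithin g (Iio x) x := by
    refine le_of_tendsto_of_tendsto hfL hL ?_
    filter_upwards [self_mem_nhdsWithin, mem_nhdsWithin_of_mem_nhds hxS] with y hyx hy
    rw [slope_def_field, slope_def_field, div_le_div_right_of_neg (sub_neg.2 hyx), heq]
    linarith [hle y hy]
  have hLR := hg.leftDeriv_le_rightDeriv_of_mem_interior hx
  rw [hasDerivAt_iff_tendsto_slope_left_right]
  exact ⟨(le_antisymm hleft (hLR.trans hright)) ▸ hL,
    (le_antisymm hright (hleft.trans hLR)) ▸ hR⟩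

variable {a b : ℝ}

lemma exists_hasDerivWithinAt_Icc_left (hg : ConvexOn ℝ (Icc a b) g) (hab : a < b)
    (hbdd : BddBelow (slope g a '' Ioo a b)) : ∃ d, HasDerivWithinAt g d (Icc a b) a := by
  have hmono : MonotoneOn (slope g a) (Ioo a b) :=
    (hg.slope_mono (left_mem_Icc.2 hab.le)).mono fun y hy => ⟨Ioo_subset_Icc_self hy, hy.1.ne'⟩
  refine ⟨sInf (slope g a '' Ioo a b), ?_⟩
  rw [hasDerivWithinAt_iff_tendsto_slope, Icc_sdiff_left, nhdsWithin_Ioc_eq_nhdsGT hab]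
  exact hmono.tendsto_nhdsWithin_Ioo_right (nonempty_Ioo.2 hab) hbdd

lemma exists_hasDerivWithinAt_Icc_right (hg : ConvexOn ℝ (Icc a b) g) (hab : a < b)
    (hbdd : BddAbove (slope g b '' Ioo a b)) : ∃ d, HasDerivWithinAt g d (Icc a b) b := by
  have hmono : MonotoneOn (slope g b) (Ioo a b) :=
    (hg.slope_mono (right_mem_Icc.2 hab.le)).mono fun y hy => ⟨Ioo_subset_Icc_self hy, hy.2.ne⟩
  refine ⟨sSup (slope g b '' Ioo a b), ?_⟩
  rw [hasDerivWithinAt_iff_tendsto_slope, Icc_sdiff_right, nhdsWithin_Ico_eq_nhdsLT hab]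
  exact hmono.tendsto_nhdsWithin_Ioo_left (nonempty_Ioo.2 hab) hbdd

lemma continuousOn_derivWithin (hg : ConvexOn ℝ S g) (hd : DifferentiableOn ℝ g S) :
    ContinuousOn (derivWithin g S) S :=
  (hg.monotoneOn_derivWithin hd).continuousOn_of_ordConnected_image
    (hg.1.ordConnected.image_derivWithin hd)

end ConvexOn

lemma convexOn_const_add_mul {s : Set ℝ} (hs : Convex ℝ s) (c m : ℝ) :
    ConvexOn ℝ s fun t => c + m * t :=
  ⟨hs, fun _ _ _ _ u v _ _ huv => le_of_eq (by
    simp only [smul_eq_mul]; linear_combination (-c) * huv)⟩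

section ConvEnv

variable {a b : ℝ} {f : ℝ → ℝ} {lam p q x : ℝ}

lemma convEnv_le_combo (hf : BddBelow (f '' Icc a b)) (hlam : lam ∈ Icc (0 : ℝ) 1)
    (hp : p ∈ Icc a b) (hq : q ∈ Icc a b) :
    convEnv a b f ((1 - lam) * p + lam * q) ≤ (1 - lam) * f p + lam * f q := by
  obtain ⟨m, hm⟩ := hf
  refine csInf_le ⟨m, ?_⟩ ⟨lam, p, q, hlam, hp, hq, rfl, rfl⟩
  rintro _ ⟨l, p', q', hl, hp', hq', -, rfl⟩
  have := hm (mem_image_of_mem f hp')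
  have := hm (mem_image_of_mem f hq')
  nlinarith [hl.1, hl.2]

lemma convEnv_le_self (hf : BddBelow (f '' Icc a b)) (hx : x ∈ Icc a b) :
    convEnv a b f x ≤ f x := by
  simpa using convEnv_le_combo (lam := 0) hf (by simp) hx hx

lemma ConvexOn.le_convEnv {φ : ℝ → ℝ} (hφ : ConvexOn ℝ (Icc a b) φ)
    (hφf : ∀ y ∈ Icc a b, φ y ≤ f y) (hx : x ∈ Icc a b) : φ x ≤ convEnv a b f x := by
  refine le_csInf ⟨f x, 0, x, x, by simp, hx, hx, by ring, by ring⟩ ?_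
  rintro _ ⟨l, p, q, hl, hp, hq, rfl, rfl⟩
  calc φ ((1 - l) * p + l * q) ≤ (1 - l) * φ p + l * φ q :=
        hφ.2 hp hq (by linarith [hl.2]) hl.1 (by ring)
    _ ≤ (1 - l) * f p + l * f q := by
        gcongr
        · linarith [hl.2]
        · exact hφf p hp
        · exact hl.1
        · exact hφf q hq

lemma exists_convEnv_eq_combo (hf : ContinuousOn f (Icc a b)) (hx : x ∈ Icc a b) :
    ∃ lam ∈ Icc (0 : ℝ) 1, ∃ p ∈ Icc a b, ∃ q ∈ Icc a b, p ≤ q ∧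
      (1 - lam) * p + lam * q = x ∧ convEnv a b f x = (1 - lam) * f p + lam * f q := by
  set T : Set (ℝ × ℝ × ℝ) := (Icc (0 : ℝ) 1 ×ˢ Icc a b ×ˢ Icc a b) ∩
    {z | (1 - z.1) * z.2.1 + z.1 * z.2.2 = x}
  have hT : IsCompact T := (isCompact_Icc.prod (isCompact_Icc.prod isCompact_Icc)).inter_right
    (isClosed_eq (by fun_prop) continuous_const)
  have hV : ContinuousOn (fun z : ℝ × ℝ × ℝ => (1 - z.1) * f z.2.1 + z.1 * f z.2.2) T :=
    ((continuousOn_const.sub continuousOn_fst).mul (hf.comp (by fun_prop) fun z hz => hz.1.2.1)).add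
      (continuousOn_fst.mul (hf.comp (by fun_prop) fun z hz => hz.1.2.2))
  obtain ⟨⟨l, p, q⟩, ⟨⟨hl, hp, hq⟩, hpq⟩, hmin⟩ :=
    hT.exists_isMinOn ⟨(0, x, x), ⟨by simp, hx, hx⟩, by simp⟩ hV
  have hfb : BddBelow (f '' Icc a b) := isCompact_Icc.bddBelow_image hf
  have heq : convEnv a b f x = (1 - l) * f p + l * f q := by
    refine le_antisymm (hpq ▸ convEnv_le_combo hfb hl hp hq) ?_
    refine le_csInf ⟨f x, 0, x, x, by simp, hx, hx, by ring, by ring⟩ ?_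
    rintro _ ⟨l', p', q', hl', hp', hq', hx', rfl⟩
    exact hmin (show (l', p', q') ∈ T from ⟨⟨hl', hp', hq'⟩, hx'⟩)
  rcases le_total p q with hpq' | hqp
  · exact ⟨l, hl, p, hp, q, hq, hpq', hpq, heq⟩
  · refine ⟨1 - l, ⟨by linarith [hl.2], by linarith [hl.1]⟩, q, hq, p, hp, hqp, ?_, ?_⟩
    · rw [← hpq]; ring
    · rw [heq]; ring

lemma convEnv_mul_le_chord (hf : BddBelow (f '' Icc a b)) (hp : p ∈ Icc a b) (hq : q ∈ Icc a b)
    (hx : x ∈ Icc p q) : (q - p) * convEnv a b f x ≤ (q - x) * f p + (x - p) * f q := by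
  rcases (hx.1.trans hx.2).eq_or_lt with rfl | hpq
  · obtain rfl : x = p := le_antisymm hx.2 hx.1
    simp
  have hqp : 0 < q - p := sub_pos.2 hpq
  have hlam : (x - p) / (q - p) ∈ Icc (0 : ℝ) 1 :=
    ⟨div_nonneg (sub_nonneg.2 hx.1) hqp.le, (div_le_one hqp).2 (by linarith [hx.2])⟩
  have key := convEnv_le_combo hf hlam hp hq
  rw [show (1 - (x - p) / (q - p)) * p + (x - p) / (q - p) * q = x by field_simp; ring] at key
  calc (q - p) * convEnv a b f x
      ≤ (q - p) * ((1 - (x - p) / (q - p)) * f p + (x - p) / (q - p) * f q) := by gcongr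
    _ = (q - x) * f p + (x - p) * f q := by field_simp; ring

lemma convEnv_le_combo₃ (hf : BddBelow (f '' Icc a b)) {r₀ r₁ r₂ u v w : ℝ}
    (h₀ : r₀ ∈ Icc a b) (h₂ : r₂ ∈ Icc a b) (h₀₁ : r₀ ≤ r₁) (h₁₂ : r₁ ≤ r₂)
    (hu : 0 ≤ u) (hv : 0 ≤ v) (hw : 0 ≤ w) (hsum : u + v + w = 1) :
    convEnv a b f (u * r₀ + v * r₁ + w * r₂) ≤ u * f r₀ + v * f r₁ + w * f r₂ := by
  obtain rfl : u = 1 - v - w := by linarith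
  have h₁ : r₁ ∈ Icc a b := ⟨h₀.1.trans h₀₁, h₁₂.trans h₂.2⟩
  have hz₀ : r₀ ≤ (1 - v - w) * r₀ + v * r₁ + w * r₂ := by
    nlinarith [mul_nonneg hv (sub_nonneg.2 h₀₁), mul_nonneg hw (sub_nonneg.2 (h₀₁.trans h₁₂))]
  have hz₂ : (1 - v - w) * r₀ + v * r₁ + w * r₂ ≤ r₂ := by
    nlinarith [mul_nonneg hu (sub_nonneg.2 (h₀₁.trans h₁₂)), mul_nonneg hv (sub_nonneg.2 h₁₂)]
  rcases (h₀₁.trans h₁₂).eq_or_lt with h₀₂ | h₀₂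
  · obtain ⟨rfl, rfl⟩ : r₁ = r₀ ∧ r₂ = r₀ := ⟨by linarith, by linarith⟩
    convert convEnv_le_self hf h₀ using 2 <;> ring
  -- if `f r₁` lies on or above the chord over `[r₀, r₂]`, that chord lies below the combination;
  -- otherwise the broken line through the three points does
  by_cases hbelow : (r₂ - r₁) * f r₀ + (r₁ - r₀) * f r₂ ≤ (r₂ - r₀) * f r₁
  · have := convEnv_mul_le_chord hf h₀ h₂ ⟨hz₀, hz₂⟩
    refine le_of_mul_le_mul_left ?_ (sub_pos.2 h₀₂)
    linear_combination this + v * hbelow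
  · push Not at hbelow
    have h₀₁' : r₀ < r₁ := h₀₁.lt_of_ne (by rintro rfl; linarith)
    have h₁₂' : r₁ < r₂ := h₁₂.lt_of_ne (by rintro rfl; linarith)
    rcases le_total ((1 - v - w) * r₀ + v * r₁ + w * r₂) r₁ with hz₁ | hz₁
    · have := convEnv_mul_le_chord hf h₀ h₁ ⟨hz₀, hz₁⟩
      refine le_of_mul_le_mul_left ?_ (sub_pos.2 h₀₁')
      linear_combination this + w * hbelow.le
    · have := convEnv_mul_le_chord hf h₁ h₂ ⟨hz₁, hz₂⟩
      refine le_of_mul_le_mul_left ?_ (sub_pos.2 h₁₂')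
      linear_combination this + (1 - v - w) * hbelow.le

lemma convEnv_combo_le (hf : ContinuousOn f (Icc a b)) {y s t : ℝ} (hx : x ∈ Icc a b)
    (hy : y ∈ Icc a b) (hs : 0 ≤ s) (ht : 0 ≤ t) (hst : s + t = 1) :
    convEnv a b f (s * x + t * y) ≤ s * convEnv a b f x + t * f y := by
  have hfb : BddBelow (f '' Icc a b) := isCompact_Icc.bddBelow_image hf
  obtain ⟨l, hl, p, hp, q, hq, hpq, rfl, hgx⟩ := exists_convEnv_eq_combo hf hx
  have hsp : 0 ≤ s * (1 - l) := mul_nonneg hs (sub_nonneg.2 hl.2)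
  have hsq : 0 ≤ s * l := mul_nonneg hs hl.1
  rw [hgx]
  rcases le_total y p with hyp | hpy
  · convert convEnv_le_combo₃ hfb hy hq hyp hpq ht hsp hsq (by linear_combination hst)
      using 1
    · congr 1; ring
    · ring
  rcases le_total y q with hyq | hqy
  · convert convEnv_le_combo₃ hfb hp hq hpy hyq hsp ht hsq (by linear_combination hst)
      using 1
    · congr 1; ring
    · ring
  · convert convEnv_le_combo₃ hfb hp hy hpq hqy hsp hsq ht (by linear_combination hst)
      using 1
    · congr 1; ring
    · ring

theorem convexOn_convEnv (hf : ContinuousOn f (Icc a b)) :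
    ConvexOn ℝ (Icc a b) (convEnv a b f) := by
  refine ⟨convex_Icc a b, fun x hx y hy s t hs ht hst => ?_⟩
  simp only [smul_eq_mul]
  rcases hs.eq_or_lt with rfl | hs
  · obtain rfl : t = 1 := by linarith
    simp
  obtain ⟨μ, hμ, p, hp, q, hq, -, rfl, hgy⟩ := exists_convEnv_eq_combo hf hy
  -- `s x + t y` combines `x`, `p` and `q`: merge `x` with `p` first, then the result with `q`
  set w := s + t * (1 - μ) with hw_def
  have hw : 0 < w := add_pos_of_pos_of_nonneg hs (mul_nonneg ht (sub_nonneg.2 hμ.2))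
  have hx' : (s / w) * x + (t * (1 - μ) / w) * p ∈ Icc a b :=
    convex_Icc a b hx hp (by positivity) (div_nonneg (mul_nonneg ht (sub_nonneg.2 hμ.2)) hw.le)
      (by field_simp; exact hw_def.symm)
  have step₁ := convEnv_combo_le (s := s / w) (t := t * (1 - μ) / w) hf hx hp (by positivity)
    (div_nonneg (mul_nonneg ht (sub_nonneg.2 hμ.2)) hw.le) (by field_simp; exact hw_def.symm)
  have step₂ := convEnv_combo_le hf hx' hq hw.le (mul_nonneg ht hμ.1)
    (by linear_combination hst)
  calc convEnv a b f (s * x + t * ((1 - μ) * p + μ * q))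
      = convEnv a b f (w * ((s / w) * x + (t * (1 - μ) / w) * p) + t * μ * q) := by
        congr 1; field_simp; ring
    _ ≤ w * convEnv a b f ((s / w) * x + (t * (1 - μ) / w) * p) + t * μ * f q := step₂
    _ ≤ w * ((s / w) * convEnv a b f x + (t * (1 - μ) / w) * f p) + t * μ * f q := by gcongr
    _ = s * convEnv a b f x + t * convEnv a b f ((1 - μ) * p + μ * q) := by
        rw [hgy]; field_simp; ring

lemma convEnv_eq_self_or_chord (hf : ContinuousOn f (Icc a b)) (hx : x ∈ Icc a b) :
    convEnv a b f x = f x ∨ ∃ p ∈ Icc a b, ∃ q ∈ Icc a b,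
      x ∈ Ioo p q ∧ convEnv a b f x = f p + slope f p q * (x - p) := by
  obtain ⟨l, hl, p, hp, q, hq, hpq, rfl, hgx⟩ := exists_convEnv_eq_combo hf hx
  rcases hpq.eq_or_lt with rfl | hpq
  · left; rw [hgx]; ring_nf
  rcases hl.1.eq_or_lt with rfl | hl₀
  · left; rw [hgx]; ring_nf
  rcases hl.2.eq_or_lt with rfl | hl₁
  · left; rw [hgx]; ring_nf
  right
  refine ⟨p, hp, q, hq, ⟨by nlinarith, by nlinarith⟩, ?_⟩
  rw [hgx, slope_def_field]
  field_simp [(sub_pos.2 hpq).ne']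
  ring

lemma differentiableAt_convEnv (hf : ContinuousOn f (Icc a b)) (hx : x ∈ Ioo a b)
    (hfx : DifferentiableAt ℝ f x) : DifferentiableAt ℝ (convEnv a b f) x := by
  have hfb : BddBelow (f '' Icc a b) := isCompact_Icc.bddBelow_image hf
  have hconv := convexOn_convEnv hf
  rcases convEnv_eq_self_or_chord hf (Ioo_subset_Icc_self hx) with heq | ⟨p, hp, q, hq, hxpq, heq⟩
  · exact (hconv.hasDerivAt_of_le_of_eq (by rwa [interior_Icc])
      (fun y hy => convEnv_le_self hfb hy) heq hfx.hasDerivAt).differentiableAt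
  · have hpq : 0 < q - p := sub_pos.2 (hxpq.1.trans hxpq.2)
    have hchord : HasDerivAt (fun t => f p + slope f p q * (t - p)) (slope f p q) x := by
      simpa using ((hasDerivAt_id x).sub_const p).const_mul (slope f p q) |>.const_add (f p)
    refine ((hconv.subset (Icc_subset_Icc hp.1 hq.2) (convex_Icc p q)).hasDerivAt_of_le_of_eq
      (by rwa [interior_Icc]) (fun y hy => ?_) heq hchord).differentiableAt
    have := convEnv_mul_le_chord hfb hp hq hy
    rw [slope_def_field, ← mul_le_mul_iff_of_pos_left hpq]
    field_simp
    linarith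

lemma differentiableWithinAt_convEnv_left (hab : a < b) {K : ℝ≥0}
    (hf : LipschitzOnWith K f (Icc a b)) :
    DifferentiableWithinAt ℝ (convEnv a b f) (Icc a b) a := by
  have ha : a ∈ Icc a b := left_mem_Icc.2 hab.le
  have hfb : BddBelow (f '' Icc a b) := isCompact_Icc.bddBelow_image hf.continuousOn
  have hlower : ∀ y ∈ Icc a b, f a + (-K) * (y - a) ≤ convEnv a b f y := fun y hy =>
    (convexOn_const_add_mul (convex_Icc a b) (f a + K * a) (-K)).le_convEnv
      (fun z hz => by
        have := hf.le_add_mul ha hz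
        rw [Real.dist_eq, abs_of_nonpos (by linarith [hz.1])] at this
        linarith)
      hy |>.trans_eq' (by ring)
  obtain ⟨d, hd⟩ := (convexOn_convEnv hf.continuousOn).exists_hasDerivWithinAt_Icc_left hab
    ⟨-K, by
      rintro _ ⟨y, hy, rfl⟩
      rw [slope_def_field, le_div_iff₀ (sub_pos.2 hy.1)]
      linarith [hlower y (Ioo_subset_Icc_self hy), convEnv_le_self hfb ha]⟩
  exact hd.differentiableWithinAt

lemma differentiableWithinAt_convEnv_right (hab : a < b) {K : ℝ≥0}
    (hf : LipschitzOnWith K f (Icc a b)) :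
    DifferentiableWithinAt ℝ (convEnv a b f) (Icc a b) b := by
  have hb : b ∈ Icc a b := right_mem_Icc.2 hab.le
  have hfb : BddBelow (f '' Icc a b) := isCompact_Icc.bddBelow_image hf.continuousOn
  have hlower : ∀ y ∈ Icc a b, f b + K * (y - b) ≤ convEnv a b f y := fun y hy =>
    (convexOn_const_add_mul (convex_Icc a b) (f b - K * b) K).le_convEnv
      (fun z hz => by
        have := hf.le_add_mul hb hz
        rw [Real.dist_eq, abs_of_nonneg (by linarith [hz.2])] at this
        linarith)
      hy |>.trans_eq' (by ring)
  obtain ⟨d, hd⟩ := (convexOn_convEnv hf.continuousOn).exists_hasDerivWithinAt_Icc_right hab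
    ⟨K, by
      rintro _ ⟨y, hy, rfl⟩
      rw [slope_comm, slope_def_field, div_le_iff₀ (sub_pos.2 hy.2)]
      linarith [hlower y (Ioo_subset_Icc_self hy), convEnv_le_self hfb hb]⟩
  exact hd.differentiableWithinAt

lemma differentiableOn_convEnv (hab : a < b) {K : ℝ≥0} (hf : LipschitzOnWith K f (Icc a b))
    (hf' : DifferentiableOn ℝ f (Ioo a b)) : DifferentiableOn ℝ (convEnv a b f) (Icc a b) := by
  intro x hx
  rcases hx.1.eq_or_lt with rfl | hax
  · exact differentiableWithinAt_convEnv_left hab hf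
  rcases hx.2.eq_or_lt with rfl | hxb
  · exact differentiableWithinAt_convEnv_right hab hf
  exact (differentiableAt_convEnv hf.continuousOn ⟨hax, hxb⟩
    (hf'.differentiableAt (isOpen_Ioo.mem_nhds ⟨hax, hxb⟩))).differentiableWithinAt

end ConvEnv

/-- If `f` is `C¹` on `[a,b]`, then its convex envelope `f**` is `C¹` on `[a,b]`. -/
theorem convEnv_contDiffOn (a b : ℝ) (hab : a < b) (f : ℝ → ℝ)
    (hf : ContDiffOn ℝ 1 f (Set.Icc a b)) :
    ContDiffOn ℝ 1 (convEnv a b f) (Set.Icc a b) := by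
  obtain ⟨K, hK⟩ := hf.exists_lipschitzOnWith one_ne_zero (convex_Icc a b) isCompact_Icc
  have hdiff : DifferentiableOn ℝ (convEnv a b f) (Icc a b) :=
    differentiableOn_convEnv hab hK ((hf.differentiableOn one_ne_zero).mono Ioo_subset_Icc_self)
  rw [contDiffOn_one_iff_derivWithin (uniqueDiffOn_Icc hab)]
  exact ⟨hdiff, (convexOn_convEnv hK.continuousOn).continuousOn_derivWithin hdiff⟩
end

section
/- Let f ∈ C¹([a,b]), let φ be a smooth function compactly supported in (a,b), and let x₀ ∈ (a,b) be an exposed point of the epigraph of f**, i.e. f**(x₀) = f(x₀) and f**(x) > f(x₀) + f'(x₀)(x−x₀) for all x ∈ [a,b] with x ≠ x₀. Then lim_{s→0} ((f+sφ)**(x₀) − f**(x₀))/s = φ(x₀). -/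
open Set MeasureTheory Filter Topology

private lemma convEnv_le_self_s1 (a b : ℝ) (hab : a ≤ b) (g : ℝ → ℝ) (m : ℝ)
    (hm : ∀ x ∈ Set.Icc a b, m ≤ g x) {u : ℝ} (hu : u ∈ Set.Icc a b) :
    convEnv a b g u ≤ g u := by
  apply csInf_le
  · refine ⟨m, ?_⟩
    rintro y ⟨lam, x0, x1, ⟨hl0, hl1⟩, hx0, hx1, -, rfl⟩
    have h0 := hm x0 hx0
    have h1 := hm x1 hx1
    nlinarith
  · exact ⟨0, u, a, by norm_num, hu, ⟨le_refl a, hab⟩, by ring, by ring⟩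

/-- At an exposed point `x₀` of the epigraph of `f**`, the difference quotient
`((f+sφ)**(x₀) - f**(x₀))/s` tends to `φ(x₀)` as `s → 0`. -/
theorem convEnv_diffQuot_tendsto_at_exposed (a b : ℝ) (hab : a < b)
    (f φ : ℝ → ℝ) (f' x₀ : ℝ)
    (hf : ContDiffOn ℝ 1 f (Set.Icc a b))
    (hx₀ : x₀ ∈ Set.Ioo a b)
    (hf' : HasDerivAt f f' x₀)
    (hφ : ContDiff ℝ (⊤ : ℕ∞) φ) (hsupp : tsupport φ ⊆ Set.Ioo a b)
    (hcontact : convEnv a b f x₀ = f x₀)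
    (hexposed : ∀ x ∈ Set.Icc a b, x ≠ x₀ → f x₀ + f' * (x - x₀) < convEnv a b f x) :
    Filter.Tendsto
      (fun s : ℝ => (convEnv a b (fun y => f y + s * φ y) x₀ - convEnv a b f x₀) / s)
      (𝓝[≠] (0:ℝ)) (𝓝 (φ x₀)) := by
  have hx₀' : x₀ ∈ Set.Icc a b := Set.mem_Icc_of_Ioo hx₀
  obtain ⟨xm, hxm, hmle'⟩ := isCompact_Icc.exists_isMinOn ⟨a, le_refl a, hab.le⟩
    (hf.continuousOn)
  have hmle := isMinOn_iff.mp hmle'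
  have hfle : ∀ u ∈ Set.Icc a b, convEnv a b f u ≤ f u := fun u hu =>
    convEnv_le_self_s1 a b hab.le f (f xm) (fun x hx => hmle x hx) hu
  have hnn : ∀ u ∈ Set.Icc a b, 0 ≤ f u - (f x₀ + f' * (u - x₀)) := by
    intro u hu
    rcases eq_or_ne u x₀ with rfl | hne
    · simp
    · have h1 := hexposed u hu hne
      have h2 := hfle u hu
      linarith
  rw [Metric.tendsto_nhds]
  intro ε hε
  obtain ⟨r, hr, hrφ⟩ := Metric.continuousAt_iff.mp (hφ.continuous.continuousAt : ContinuousAt φ x₀) (ε/2)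
    (by linarith)
  obtain ⟨xM, hxM, hMge'⟩ := isCompact_Icc.exists_isMaxOn ⟨x₀, hx₀'⟩
    ((continuous_abs.comp (hφ.continuous.sub continuous_const)).continuousOn :
      ContinuousOn (fun u => |φ u - φ x₀|) (Set.Icc a b))
  have hMge := isMaxOn_iff.mp hMge'
  set M := |φ xM - φ x₀| with hMdef
  have hM0 : 0 ≤ M := abs_nonneg _
  have hMb : ∀ u ∈ Set.Icc a b, |φ u - φ x₀| ≤ M := hMge
  set K := Set.Icc a b ∩ {u : ℝ | r ≤ |u - x₀|} with hKdef
  have hKc : IsCompact K := isCompact_Icc.inter_right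
    (isClosed_le continuous_const (continuous_abs.comp (continuous_id.sub continuous_const)))
  have hcex : ∃ c > 0, ∀ u ∈ K, c ≤ f u - (f x₀ + f' * (u - x₀)) := by
    rcases K.eq_empty_or_nonempty with hKe | hKne
    · refine ⟨1, one_pos, ?_⟩
      intro u hu
      rw [hKe] at hu
      exact absurd hu (Set.notMem_empty u)
    · obtain ⟨xc, hxc, hcle'⟩ := hKc.exists_isMinOn hKne
        (((hf.continuousOn.sub (Continuous.continuousOn (by continuity))).mono
          Set.inter_subset_left) :
          ContinuousOn (fun u => f u - (f x₀ + f' * (u - x₀))) K)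
      have hcle := isMinOn_iff.mp hcle'
      refine ⟨_, ?_, hcle⟩
      have hxcne : xc ≠ x₀ := by
        intro h
        have h2 := hxc.2
        rw [h] at h2
        simp only [Set.mem_setOf_eq, sub_self, abs_zero] at h2
        linarith
      have h1 := hexposed xc hxc.1 hxcne
      have h2 := hfle xc hxc.1
      show 0 < f xc - (f x₀ + f' * (xc - x₀)); linarith
  obtain ⟨c, hc0, hcK⟩ := hcex
  set δ := c / (M + 1) with hδdef
  have hδ0 : 0 < δ := div_pos hc0 (by linarith)
  have key : ∀ s : ℝ, |s| < δ → ∀ u ∈ Set.Icc a b,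
      -(ε/2) * |s| ≤ (f u - (f x₀ + f' * (u - x₀))) + s * (φ u - φ x₀) := by
    intro s hs u hu
    have h2 : -(|s| * |φ u - φ x₀|) ≤ s * (φ u - φ x₀) := by
      rw [← abs_mul]; exact neg_abs_le _
    rcases lt_or_ge (|u - x₀|) r with h | h
    · have hφu : |φ u - φ x₀| ≤ ε/2 := by
        have := hrφ (show dist u x₀ < r by rwa [Real.dist_eq])
        rw [Real.dist_eq] at this
        linarith
      have h1 := hnn u hu
      nlinarith [abs_nonneg s, abs_nonneg (φ u - φ x₀)]
    · have h1 := hcK u ⟨hu, h⟩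
      have h3 := hMb u hu
      have h4 : |s| * (M + 1) < c := by
        rw [hδdef, lt_div_iff₀ (by linarith : (0:ℝ) < M + 1)] at hs
        linarith
      nlinarith [abs_nonneg s, mul_le_mul_of_nonneg_left h3 (abs_nonneg s),
        mul_nonneg (by linarith : (0:ℝ) ≤ ε/2) (abs_nonneg s)]
  have sandwich : ∀ s : ℝ, |s| < δ →
      f x₀ + s * φ x₀ - (ε/2) * |s| ≤ convEnv a b (fun y => f y + s * φ y) x₀ ∧
      convEnv a b (fun y => f y + s * φ y) x₀ ≤ f x₀ + s * φ x₀ := by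
    intro s hs
    have hmem : (f x₀ + s * φ x₀) ∈ {y : ℝ | ∃ lam u v : ℝ, lam ∈ Set.Icc (0:ℝ) 1 ∧
        u ∈ Set.Icc a b ∧ v ∈ Set.Icc a b ∧ (1 - lam) * u + lam * v = x₀ ∧
        y = (1 - lam) * (f u + s * φ u) + lam * (f v + s * φ v)} :=
      ⟨0, x₀, a, by norm_num, hx₀', ⟨le_refl a, hab.le⟩, by ring, by ring⟩
    have hlb : ∀ y ∈ {y : ℝ | ∃ lam u v : ℝ, lam ∈ Set.Icc (0:ℝ) 1 ∧
        u ∈ Set.Icc a b ∧ v ∈ Set.Icc a b ∧ (1 - lam) * u + lam * v = x₀ ∧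
        y = (1 - lam) * (f u + s * φ u) + lam * (f v + s * φ v)},
        f x₀ + s * φ x₀ - (ε/2) * |s| ≤ y := by
      rintro y ⟨lam, u, v, ⟨hl0, hl1⟩, hu, hv, hcomb, rfl⟩
      have A := key s hs u hu
      have B := key s hs v hv
      have hlin : (1 - lam) * (f' * (u - x₀)) + lam * (f' * (v - x₀)) = 0 := by
        linear_combination f' * hcomb
      have hA := mul_le_mul_of_nonneg_left A (by linarith : (0:ℝ) ≤ 1 - lam)
      have hB := mul_le_mul_of_nonneg_left B hl0
      nlinarith [hA, hB, hlin]
    unfold convEnv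
    exact ⟨le_csInf ⟨_, hmem⟩ hlb, csInf_le ⟨_, hlb⟩ hmem⟩
  have hev1 : ∀ᶠ s : ℝ in 𝓝[≠] (0:ℝ), |s| < δ := by
    have h1 : ∀ᶠ s : ℝ in 𝓝 (0:ℝ), |s| < δ := by
      filter_upwards [Metric.ball_mem_nhds (0:ℝ) hδ0] with s hs
      simpa [Real.dist_eq] using hs
    exact h1.filter_mono nhdsWithin_le_nhds
  filter_upwards [hev1, self_mem_nhdsWithin] with s hs hs0
  have hs0' : s ≠ 0 := hs0
  obtain ⟨hL, hU⟩ := sandwich s hs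
  rw [hcontact, Real.dist_eq]
  have habs : 0 < |s| := abs_pos.mpr hs0'
  have heq : (convEnv a b (fun y => f y + s * φ y) x₀ - f x₀) / s - φ x₀
      = (convEnv a b (fun y => f y + s * φ y) x₀ - f x₀ - s * φ x₀) / s := by
    field_simp
  rw [heq, abs_div, div_lt_iff₀ habs]
  have hb : |convEnv a b (fun y => f y + s * φ y) x₀ - f x₀ - s * φ x₀| ≤ (ε/2) * |s| :=
    abs_le.mpr ⟨by linarith, by nlinarith⟩
  nlinarith
end

section
/- Let f ∈ C¹([a,b]) satisfy condition (noflat). Then for every smooth function φ compactly supported in (a,b), the Gateaux derivative of the functional g ↦ ∫_a^b g** dx at f in direction φ exists and lim_{s→0} ∫_a^b ((f+sφ)** − f**)/s dx = ∫_a^b J^φ(x) dx. -/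
open Set MeasureTheory Filter Topology

/-- Condition (noflat): `f > f**` on every open subinterval of `(a,b)` on which
`f**` is affine. -/
def NoFlat (a b : ℝ) (f : ℝ → ℝ) : Prop :=
  ∀ c d : ℝ, a ≤ c → c < d → d ≤ b →
    (∃ m q : ℝ, ∀ x ∈ Set.Ioo c d, convEnv a b f x = m * x + q) →
    ∀ x ∈ Set.Ioo c d, convEnv a b f x < f x

/-- `J` is the function `J^φ` associated to `f` and `φ`: it equals `φ` on the contact
set `{f = f**}` and is the affine interpolation of `φ` on each maximal open interval
`(c,d)` of the set `{f > f**}`. -/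
def IsJ (a b : ℝ) (f φ J : ℝ → ℝ) : Prop :=
  (∀ x ∈ Set.Icc a b, f x = convEnv a b f x → J x = φ x) ∧
  ∀ c d : ℝ, a ≤ c → c < d → d ≤ b →
    (∀ x ∈ Set.Ioo c d, convEnv a b f x < f x) →
    (c = a ∨ f c = convEnv a b f c) → (d = b ∨ f d = convEnv a b f d) →
    ∀ x ∈ Set.Ioo c d, J x = φ c + ((φ d - φ c) / (d - c)) * (x - c)

variable {a b : ℝ} {f φ : ℝ → ℝ}

def envSet (a b : ℝ) (f : ℝ → ℝ) (x : ℝ) : Set ℝ :=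
  {y : ℝ | ∃ lam x₀ x₁ : ℝ, lam ∈ Set.Icc (0:ℝ) 1 ∧ x₀ ∈ Set.Icc a b ∧
    x₁ ∈ Set.Icc a b ∧ (1 - lam) * x₀ + lam * x₁ = x ∧
    y = (1 - lam) * f x₀ + lam * f x₁}

lemma convEnv_def (x : ℝ) : convEnv a b f x = sInf (envSet a b f x) := rfl

lemma CE_bddBelow (hab : a ≤ b) (hf : ContinuousOn f (Icc a b)) (x : ℝ) :
    BddBelow (envSet a b f x) := by
  obtain ⟨m, hm, hmin⟩ := isCompact_Icc.exists_isMinOn (nonempty_Icc.2 hab) hf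
  refine ⟨f m, fun y hy => ?_⟩
  obtain ⟨lam, x₀, x₁, ⟨h0, h1⟩, hx₀, hx₁, -, rfl⟩ := hy
  have h0' : f m ≤ f x₀ := hmin hx₀
  have h1' : f m ≤ f x₁ := hmin hx₁
  nlinarith

lemma CE_le_combo (hab : a ≤ b) (hf : ContinuousOn f (Icc a b)) {lam x₀ x₁ x : ℝ}
    (hlam : lam ∈ Icc (0:ℝ) 1) (hx₀ : x₀ ∈ Icc a b) (hx₁ : x₁ ∈ Icc a b)
    (hx : (1 - lam) * x₀ + lam * x₁ = x) :
    convEnv a b f x ≤ (1 - lam) * f x₀ + lam * f x₁ :=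
  csInf_le (CE_bddBelow hab hf x) ⟨lam, x₀, x₁, hlam, hx₀, hx₁, hx, rfl⟩

lemma CE_le_self (hab : a ≤ b) (hf : ContinuousOn f (Icc a b)) {x : ℝ} (hx : x ∈ Icc a b) :
    convEnv a b f x ≤ f x := by
  have := CE_le_combo (f := f) hab hf (lam := 0) (x₀ := x) (x₁ := x)
    ⟨le_refl 0, zero_le_one⟩ hx hx (by ring)
  linarith

def envK (a b x : ℝ) : Set (ℝ × ℝ × ℝ) :=
  {p | p.1 ∈ Icc (0:ℝ) 1 ∧ p.2.1 ∈ Icc a b ∧ p.2.2 ∈ Icc a b ∧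
    (1 - p.1) * p.2.1 + p.1 * p.2.2 = x}

lemma envK_compact (a b x : ℝ) : IsCompact (envK a b x) := by
  have hsub : envK a b x ⊆ (Icc (0:ℝ) 1) ×ˢ ((Icc a b) ×ˢ (Icc a b)) := by
    rintro p ⟨h1, h2, h3, -⟩
    exact ⟨h1, h2, h3⟩
  have hcl : IsClosed (envK a b x) := by
    have : envK a b x = ((Icc (0:ℝ) 1) ×ˢ ((Icc a b) ×ˢ (Icc a b))) ∩
        {p : ℝ × ℝ × ℝ | (1 - p.1) * p.2.1 + p.1 * p.2.2 = x} := by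
      ext p; constructor
      · rintro ⟨h1, h2, h3, h4⟩; exact ⟨⟨h1, h2, h3⟩, h4⟩
      · rintro ⟨⟨h1, h2, h3⟩, h4⟩; exact ⟨h1, h2, h3, h4⟩
    rw [this]
    exact ((isClosed_Icc.prod (isClosed_Icc.prod isClosed_Icc))).inter
      (isClosed_eq (by fun_prop) continuous_const)
  exact (isCompact_Icc.prod (isCompact_Icc.prod isCompact_Icc)).of_isClosed_subset hcl hsub

lemma CE_comboF_continuousOn (hf : ContinuousOn f (Icc a b)) {x : ℝ} :
    ContinuousOn (fun p : ℝ × ℝ × ℝ => (1 - p.1) * f p.2.1 + p.1 * f p.2.2) (envK a b x) := by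
  have h1 : ContinuousOn (fun p : ℝ × ℝ × ℝ => f p.2.1) (envK a b x) :=
    hf.comp (continuousOn_snd.fst) (fun p hp => hp.2.1)
  have h2 : ContinuousOn (fun p : ℝ × ℝ × ℝ => f p.2.2) (envK a b x) :=
    hf.comp (continuousOn_snd.snd) (fun p hp => hp.2.2.1)
  exact ((continuousOn_const.sub continuousOn_fst).mul h1).add (continuousOn_fst.mul h2)

lemma CE_attains (hab : a ≤ b) (hf : ContinuousOn f (Icc a b)) {x : ℝ} (hx : x ∈ Icc a b) :
    ∃ lam x₀ x₁ : ℝ, lam ∈ Icc (0:ℝ) 1 ∧ x₀ ∈ Icc a b ∧ x₁ ∈ Icc a b ∧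
      (1 - lam) * x₀ + lam * x₁ = x ∧
      (1 - lam) * f x₀ + lam * f x₁ = convEnv a b f x := by
  have hne : (envK a b x).Nonempty := ⟨(0, x, x), ⟨le_refl 0, zero_le_one⟩, hx, hx, by ring⟩
  obtain ⟨p, hp, hmin⟩ := (envK_compact a b x).exists_isMinOn hne (CE_comboF_continuousOn hf)
  refine ⟨p.1, p.2.1, p.2.2, hp.1, hp.2.1, hp.2.2.1, hp.2.2.2, le_antisymm ?_ ?_⟩
  · refine le_csInf ⟨_, ⟨p.1, p.2.1, p.2.2, hp.1, hp.2.1, hp.2.2.1, hp.2.2.2, rfl⟩⟩ ?_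
    rintro y ⟨lam, x₀, x₁, h1, h2, h3, h4, rfl⟩
    exact hmin (⟨h1, h2, h3, h4⟩ : (lam, x₀, x₁) ∈ envK a b x)
  · exact CE_le_combo hab hf hp.1 hp.2.1 hp.2.2.1 hp.2.2.2


lemma reduce_sorted (f : ℝ → ℝ) {w₁ w₂ w₃ z₁ z₂ z₃ : ℝ}
    (h1 : 0 ≤ w₁) (h2 : 0 ≤ w₂) (h3 : 0 ≤ w₃) (h12 : z₁ ≤ z₂) (h23 : z₂ ≤ z₃) :
    ∃ v₁ v₂ v₃ : ℝ, 0 ≤ v₁ ∧ 0 ≤ v₂ ∧ 0 ≤ v₃ ∧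
      v₁ + v₂ + v₃ = w₁ + w₂ + w₃ ∧
      v₁ * z₁ + v₂ * z₂ + v₃ * z₃ = w₁ * z₁ + w₂ * z₂ + w₃ * z₃ ∧
      v₁ * f z₁ + v₂ * f z₂ + v₃ * f z₃ ≤ w₁ * f z₁ + w₂ * f z₂ + w₃ * f z₃ ∧
      (v₁ = 0 ∨ v₂ = 0 ∨ v₃ = 0) := by
  rcases eq_or_lt_of_le (h12.trans h23) with heq | hlt
  · have e2 : z₂ = z₁ := le_antisymm (heq ▸ h23) h12
    have e3 : z₃ = z₁ := heq.symm
    exact ⟨w₁ + w₂ + w₃, 0, 0, by positivity, le_refl 0, le_refl 0, by ring,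
      by rw [e2, e3]; ring, by rw [e2, e3]; exact le_of_eq (by ring), Or.inr (Or.inl rfl)⟩
  · set θ : ℝ := (z₂ - z₁) / (z₃ - z₁) with hθdef
    have hz31 : (0:ℝ) < z₃ - z₁ := by linarith
    have hθ0 : 0 ≤ θ := div_nonneg (by linarith) hz31.le
    have hθ1 : θ ≤ 1 := by rw [div_le_one hz31]; linarith
    have hz₂ : z₂ = (1 - θ) * z₁ + θ * z₃ := by
      have h : θ * (z₃ - z₁) = z₂ - z₁ := by rw [hθdef]; exact div_mul_cancel₀ _ hz31.ne'
      linarith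
    rcases le_total (f z₂) ((1 - θ) * f z₁ + θ * f z₃) with hcase | hcase
    · rcases le_total (w₁ * θ) (w₃ * (1 - θ)) with hside | hside
      · -- eliminate z₁
        rcases eq_or_lt_of_le hθ1 with hθe | hθlt
        · have hw1 : w₁ = 0 := le_antisymm (by nlinarith) h1
          exact ⟨0, w₂, w₃, le_refl 0, h2, h3, by rw [hw1], by rw [hw1],
            by rw [hw1], Or.inl rfl⟩
        · set m : ℝ := w₁ / (1 - θ) with hmdef
          have h1θ : (0:ℝ) < 1 - θ := by linarith
          have hm0 : 0 ≤ m := div_nonneg h1 h1θ.le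
          have hm : m * (1 - θ) = w₁ := by rw [hmdef]; exact div_mul_cancel₀ _ h1θ.ne'
          have hval : m * f z₂ ≤ m * ((1 - θ) * f z₁ + θ * f z₃) :=
            mul_le_mul_of_nonneg_left hcase hm0
          refine ⟨0, w₂ + m, w₃ - m * θ, le_refl 0, by linarith, ?_, by linarith, ?_, ?_,
            Or.inl rfl⟩
          · rw [hmdef, div_mul_eq_mul_div, sub_nonneg, div_le_iff₀ h1θ]
            linarith
          · linear_combination m * hz₂ + z₁ * hm
          · have hw : m * (1 - θ) * f z₁ = w₁ * f z₁ := by rw [hm]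
            nlinarith [hval, hw]
      · -- eliminate z₃
        rcases eq_or_lt_of_le hθ0 with hθe | hθpos
        · have hw3 : w₃ = 0 := le_antisymm (by nlinarith) h3
          exact ⟨w₁, w₂, 0, h1, h2, le_refl 0, by rw [hw3], by rw [hw3],
            by rw [hw3], Or.inr (Or.inr rfl)⟩
        · set m : ℝ := w₃ / θ with hmdef
          have hm0 : 0 ≤ m := div_nonneg h3 hθpos.le
          have hm : m * θ = w₃ := by rw [hmdef]; exact div_mul_cancel₀ _ hθpos.ne'
          have hval : m * f z₂ ≤ m * ((1 - θ) * f z₁ + θ * f z₃) :=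
            mul_le_mul_of_nonneg_left hcase hm0
          refine ⟨w₁ - m * (1 - θ), w₂ + m, 0, ?_, by linarith, le_refl 0, by linarith, ?_, ?_,
            Or.inr (Or.inr rfl)⟩
          · rw [hmdef, div_mul_eq_mul_div, sub_nonneg, div_le_iff₀ hθpos]
            linarith
          · linear_combination m * hz₂ + z₃ * hm
          · have hw : m * θ * f z₃ = w₃ * f z₃ := by rw [hm]
            nlinarith [hval, hw]
    · refine ⟨w₁ + w₂ * (1 - θ), 0, w₃ + w₂ * θ, by nlinarith, le_refl 0, by nlinarith,
        by ring, ?_, ?_, Or.inr (Or.inl rfl)⟩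
      · rw [hz₂]; ring
      · nlinarith

lemma reduce_step (f : ℝ → ℝ) {w₁ w₂ w₃ z₁ z₂ z₃ : ℝ}
    (h1 : 0 ≤ w₁) (h2 : 0 ≤ w₂) (h3 : 0 ≤ w₃) :
    ∃ v₁ v₂ v₃ : ℝ, 0 ≤ v₁ ∧ 0 ≤ v₂ ∧ 0 ≤ v₃ ∧
      v₁ + v₂ + v₃ = w₁ + w₂ + w₃ ∧
      v₁ * z₁ + v₂ * z₂ + v₃ * z₃ = w₁ * z₁ + w₂ * z₂ + w₃ * z₃ ∧
      v₁ * f z₁ + v₂ * f z₂ + v₃ * f z₃ ≤ w₁ * f z₁ + w₂ * f z₂ + w₃ * f z₃ ∧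
      (v₁ = 0 ∨ v₂ = 0 ∨ v₃ = 0) := by
  rcases le_total z₁ z₂ with a12 | a12 <;> rcases le_total z₂ z₃ with a23 | a23 <;>
    rcases le_total z₁ z₃ with a13 | a13
  · obtain ⟨v₁, v₂, v₃, p1, p2, p3, ps, pb, pv, pz⟩ := reduce_sorted f h1 h2 h3 a12 a23
    exact ⟨v₁, v₂, v₃, p1, p2, p3, ps, pb, pv, pz⟩
  · obtain ⟨v₁, v₂, v₃, p1, p2, p3, ps, pb, pv, pz⟩ := reduce_sorted f h1 h2 h3 a12 a23
    exact ⟨v₁, v₂, v₃, p1, p2, p3, ps, pb, pv, pz⟩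
  · obtain ⟨v₁, v₃, v₂, p1, p3, p2, ps, pb, pv, pz⟩ := reduce_sorted f h1 h3 h2 a13 a23
    exact ⟨v₁, v₂, v₃, p1, p2, p3, by linarith, by linarith, by linarith, by tauto⟩
  · obtain ⟨v₃, v₁, v₂, p3, p1, p2, ps, pb, pv, pz⟩ := reduce_sorted f h3 h1 h2 a13 a12
    exact ⟨v₁, v₂, v₃, p1, p2, p3, by linarith, by linarith, by linarith, by tauto⟩
  · obtain ⟨v₂, v₁, v₃, p2, p1, p3, ps, pb, pv, pz⟩ := reduce_sorted f h2 h1 h3 a12 a13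
    exact ⟨v₁, v₂, v₃, p1, p2, p3, by linarith, by linarith, by linarith, by tauto⟩
  · obtain ⟨v₂, v₃, v₁, p2, p3, p1, ps, pb, pv, pz⟩ := reduce_sorted f h2 h3 h1 a23 a13
    exact ⟨v₁, v₂, v₃, p1, p2, p3, by linarith, by linarith, by linarith, by tauto⟩
  · obtain ⟨v₃, v₂, v₁, p3, p2, p1, ps, pb, pv, pz⟩ := reduce_sorted f h3 h2 h1 a23 a12
    exact ⟨v₁, v₂, v₃, p1, p2, p3, by linarith, by linarith, by linarith, by tauto⟩
  · obtain ⟨v₃, v₂, v₁, p3, p2, p1, ps, pb, pv, pz⟩ := reduce_sorted f h3 h2 h1 a23 a12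
    exact ⟨v₁, v₂, v₃, p1, p2, p3, by linarith, by linarith, by linarith, by tauto⟩

lemma CE_three_le (hab : a ≤ b) (hf : ContinuousOn f (Icc a b)) {w₁ w₂ w₃ z₁ z₂ z₃ x : ℝ}
    (h1 : 0 ≤ w₁) (h2 : 0 ≤ w₂) (h3 : 0 ≤ w₃) (hs : w₁ + w₂ + w₃ = 1)
    (hz1 : z₁ ∈ Icc a b) (hz2 : z₂ ∈ Icc a b) (hz3 : z₃ ∈ Icc a b)
    (hb : w₁ * z₁ + w₂ * z₂ + w₃ * z₃ = x) :
    convEnv a b f x ≤ w₁ * f z₁ + w₂ * f z₂ + w₃ * f z₃ := by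
  obtain ⟨v₁, v₂, v₃, p1, p2, p3, ps, pb, pv, pz⟩ := reduce_step f (z₁ := z₁) (z₂ := z₂)
    (z₃ := z₃) h1 h2 h3
  rcases pz with rfl | rfl | rfl
  · refine le_trans (CE_le_combo hab hf (lam := v₃) (x₀ := z₂) (x₁ := z₃)
      ⟨p3, by linarith⟩ hz2 hz3
      (by rw [show (1:ℝ) - v₃ = v₂ from by linarith]; linarith [pb, hb]))
      (by rw [show (1:ℝ) - v₃ = v₂ from by linarith]; linarith [pv])
  · refine le_trans (CE_le_combo hab hf (lam := v₃) (x₀ := z₁) (x₁ := z₃)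
      ⟨p3, by linarith⟩ hz1 hz3
      (by rw [show (1:ℝ) - v₃ = v₁ from by linarith]; linarith [pb, hb]))
      (by rw [show (1:ℝ) - v₃ = v₁ from by linarith]; linarith [pv])
  · refine le_trans (CE_le_combo hab hf (lam := v₂) (x₀ := z₁) (x₁ := z₂)
      ⟨p2, by linarith⟩ hz1 hz2
      (by rw [show (1:ℝ) - v₂ = v₁ from by linarith]; linarith [pb, hb]))
      (by rw [show (1:ℝ) - v₂ = v₁ from by linarith]; linarith [pv])

lemma CE_four_le (hab : a ≤ b) (hf : ContinuousOn f (Icc a b)) {w₁ w₂ w₃ w₄ z₁ z₂ z₃ z₄ x : ℝ}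
    (h1 : 0 ≤ w₁) (h2 : 0 ≤ w₂) (h3 : 0 ≤ w₃) (h4 : 0 ≤ w₄) (hs : w₁ + w₂ + w₃ + w₄ = 1)
    (hz1 : z₁ ∈ Icc a b) (hz2 : z₂ ∈ Icc a b) (hz3 : z₃ ∈ Icc a b) (hz4 : z₄ ∈ Icc a b)
    (hb : w₁ * z₁ + w₂ * z₂ + w₃ * z₃ + w₄ * z₄ = x) :
    convEnv a b f x ≤ w₁ * f z₁ + w₂ * f z₂ + w₃ * f z₃ + w₄ * f z₄ := by
  obtain ⟨v₁, v₂, v₃, p1, p2, p3, ps, pb, pv, pz⟩ := reduce_step f (z₁ := z₁) (z₂ := z₂)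
    (z₃ := z₃) h1 h2 h3
  rcases pz with rfl | rfl | rfl
  · refine le_trans (CE_three_le hab hf (w₁ := v₂) (w₂ := v₃) (w₃ := w₄) p2 p3 h4
      (by linarith) hz2 hz3 hz4 (by linarith [pb, hb])) (by linarith [pv])
  · refine le_trans (CE_three_le hab hf (w₁ := v₁) (w₂ := v₃) (w₃ := w₄) p1 p3 h4
      (by linarith) hz1 hz3 hz4 (by linarith [pb, hb])) (by linarith [pv])
  · refine le_trans (CE_three_le hab hf (w₁ := v₁) (w₂ := v₂) (w₃ := w₄) p1 p2 h4
      (by linarith) hz1 hz2 hz4 (by linarith [pb, hb])) (by linarith [pv])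

lemma CE_convexOn (hab : a ≤ b) (hf : ContinuousOn f (Icc a b)) :
    ConvexOn ℝ (Icc a b) (convEnv a b f) := by
  refine ⟨convex_Icc a b, fun y hy z hz s t hs ht hst => ?_⟩
  obtain ⟨lam, x₀, x₁, hlam, hx₀, hx₁, hcy, hvy⟩ := CE_attains hab hf hy
  obtain ⟨mu, y₀, y₁, hmu, hy₀, hy₁, hcz, hvz⟩ := CE_attains hab hf hz
  have key : convEnv a b f (s * y + t * z) ≤
      (s * (1 - lam)) * f x₀ + (s * lam) * f x₁ + (t * (1 - mu)) * f y₀ + (t * mu) * f y₁ := by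
    refine CE_four_le hab hf ?_ ?_ ?_ ?_ ?_ hx₀ hx₁ hy₀ hy₁ ?_
    · nlinarith [hlam.2]
    · exact mul_nonneg hs hlam.1
    · nlinarith [hmu.2]
    · exact mul_nonneg ht hmu.1
    · nlinarith
    · nlinarith [hcy, hcz]
  have : (s * (1 - lam)) * f x₀ + (s * lam) * f x₁ + (t * (1 - mu)) * f y₀ + (t * mu) * f y₁
      = s * convEnv a b f y + t * convEnv a b f z := by
    rw [← hvy, ← hvz]; ring
  calc convEnv a b f (s • y + t • z) = convEnv a b f (s * y + t * z) := by norm_num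
    _ ≤ _ := key
    _ = s * convEnv a b f y + t * convEnv a b f z := this
    _ = s • convEnv a b f y + t • convEnv a b f z := by norm_num

lemma CE_continuousOn (hab : a ≤ b) (hf : ContinuousOn f (Icc a b)) :
    ContinuousOn (convEnv a b f) (Ioo a b) :=
  (((CE_convexOn hab hf).subset Ioo_subset_Icc_self (convex_Ioo a b))).continuousOn isOpen_Ioo

lemma CE_argmin_structure (hab : a ≤ b) (hf : ContinuousOn f (Icc a b))
    {lam x₀ x₁ x : ℝ} (hlam0 : 0 < lam) (hlam1 : lam < 1) (hlt : x₀ < x₁)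
    (hx₀ : x₀ ∈ Icc a b) (hx₁ : x₁ ∈ Icc a b) (hx : (1 - lam) * x₀ + lam * x₁ = x)
    (hmin : (1 - lam) * f x₀ + lam * f x₁ = convEnv a b f x) :
    convEnv a b f x₀ = f x₀ ∧ convEnv a b f x₁ = f x₁ ∧
      ∀ y ∈ Icc x₀ x₁, convEnv a b f y =
        (f x₁ - f x₀) / (x₁ - x₀) * y + (f x₀ - (f x₁ - f x₀) / (x₁ - x₀) * x₀) := by
  set E := convEnv a b f with hE
  set m : ℝ := (f x₁ - f x₀) / (x₁ - x₀) with hmdef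
  set q : ℝ := f x₀ - m * x₀ with hqdef
  have hd : (0:ℝ) < x₁ - x₀ := by linarith
  have hE0 : E x₀ ≤ f x₀ := CE_le_self hab hf hx₀
  have hE1 : E x₁ ≤ f x₁ := CE_le_self hab hf hx₁
  have hconv := CE_convexOn hab hf
  have hcvx : E x ≤ (1 - lam) * E x₀ + lam * E x₁ := by
    have := hconv.2 hx₀ hx₁ (by linarith : (0:ℝ) ≤ 1 - lam) hlam0.le (by ring)
    simpa [smul_eq_mul, hx] using this
  have e0 : E x₀ = f x₀ := by
    refine le_antisymm hE0 ?_
    nlinarith [mul_nonneg hlam0.le (by linarith : 0 ≤ f x₁ - E x₁)]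
  have e1 : E x₁ = f x₁ := by
    refine le_antisymm hE1 ?_
    nlinarith [mul_nonneg (by linarith : (0:ℝ) ≤ 1 - lam) (by linarith : 0 ≤ f x₀ - E x₀)]
  have hlx₀ : m * x₀ + q = f x₀ := by rw [hqdef]; ring
  have hlx₁ : m * x₁ + q = f x₁ := by rw [hqdef, hmdef]; field_simp; ring
  have hEx : E x = m * x + q := by
    rw [← hmin, ← hx, hqdef, hmdef]; field_simp; ring
  have hxx₀ : x₀ < x := by nlinarith
  have hxx₁ : x < x₁ := by nlinarith
  refine ⟨e0, e1, fun y hy => ?_⟩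
  have hymem : y ∈ Icc a b := ⟨hx₀.1.trans hy.1, hy.2.trans hx₁.2⟩
  set t : ℝ := (y - x₀) / (x₁ - x₀) with htdef
  have ht0 : 0 ≤ t := div_nonneg (by linarith [hy.1]) hd.le
  have ht1 : t ≤ 1 := by rw [htdef, div_le_one hd]; linarith [hy.2]
  have hcy : (1 - t) * x₀ + t * x₁ = y := by rw [htdef]; field_simp; ring
  have hup : E y ≤ m * y + q := by
    have h := CE_le_combo hab hf ⟨ht0, ht1⟩ hx₀ hx₁ hcy
    have : (1 - t) * f x₀ + t * f x₁ = m * y + q := by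
      rw [htdef, hqdef, hmdef]; field_simp; ring
    linarith [h, this.ge, this.le]
  refine le_antisymm hup ?_
  by_contra hyl
  push_neg at hyl
  rcases le_or_gt y x with hyx | hyx
  · set r : ℝ := (x - y) / (x₁ - y) with hrdef
    have hy1 : (0:ℝ) < x₁ - y := by linarith
    have hr0 : 0 ≤ r := div_nonneg (by linarith) hy1.le
    have hr1 : r < 1 := by rw [hrdef, div_lt_one hy1]; linarith
    have hcomb : (1 - r) * y + r * x₁ = x := by rw [hrdef]; field_simp; ring
    have hc2 : E x ≤ (1 - r) * E y + r * E x₁ := by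
      have := hconv.2 hymem hx₁ (by linarith : (0:ℝ) ≤ 1 - r) hr0 (by ring)
      simpa [smul_eq_mul, hcomb] using this
    rw [hEx, e1, ← hlx₁] at hc2
    have hkey : m * ((1 - r) * y + r * x₁) = m * x := by rw [hcomb]
    linarith [mul_lt_mul_of_pos_left hyl (by linarith : (0:ℝ) < 1 - r), hc2, hkey]
  · set r : ℝ := (x - x₀) / (y - x₀) with hrdef
    have hy0 : (0:ℝ) < y - x₀ := by linarith
    have hr0 : 0 < r := div_pos (by linarith) hy0
    have hr1 : r ≤ 1 := by rw [hrdef, div_le_one hy0]; linarith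
    have hcomb : (1 - r) * x₀ + r * y = x := by rw [hrdef]; field_simp; ring
    have hc2 : E x ≤ (1 - r) * E x₀ + r * E y := by
      have := hconv.2 hx₀ hymem (by linarith : (0:ℝ) ≤ 1 - r) hr0.le (by ring)
      simpa [smul_eq_mul, hcomb] using this
    rw [hEx, e0, ← hlx₀] at hc2
    have hkey : m * ((1 - r) * x₀ + r * y) = m * x := by rw [hcomb]
    linarith [mul_lt_mul_of_pos_left hyl hr0, hc2, hkey]

lemma CE_argmin_char (hab : a ≤ b) (hf : ContinuousOn f (Icc a b)) (hnf : NoFlat a b f)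
    (φ : ℝ → ℝ) {lam x₀ x₁ x : ℝ}
    (hlam : lam ∈ Icc (0:ℝ) 1) (hx₀ : x₀ ∈ Icc a b) (hx₁ : x₁ ∈ Icc a b)
    (hx : (1 - lam) * x₀ + lam * x₁ = x)
    (hmin : (1 - lam) * f x₀ + lam * f x₁ = convEnv a b f x) :
    (convEnv a b f x = f x ∧ (1 - lam) * φ x₀ + lam * φ x₁ = φ x) ∨
    (∃ u w : ℝ, u ∈ Icc a b ∧ w ∈ Icc a b ∧ u < x ∧ x < w ∧
      convEnv a b f u = f u ∧ convEnv a b f w = f w ∧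
      (∀ y ∈ Ioo u w, convEnv a b f y < f y) ∧
      (1 - lam) * φ x₀ + lam * φ x₁ = φ u + (φ w - φ u) / (w - u) * (x - u)) := by
  by_cases h01 : x₀ = x₁
  · subst h01
    have hxx : x₀ = x := by linarith [hx]
    subst hxx
    exact Or.inl ⟨by rw [← hmin]; ring, by ring⟩
  · by_cases hl0 : lam = 0
    · subst hl0
      have hxx : x₀ = x := by linarith [hx]
      subst hxx
      exact Or.inl ⟨by rw [← hmin]; ring, by ring⟩
    · by_cases hl1 : lam = 1
      · subst hl1
        have hxx : x₁ = x := by linarith [hx]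
        subst hxx
        exact Or.inl ⟨by rw [← hmin]; ring, by ring⟩
      · have hlam0 : 0 < lam := lt_of_le_of_ne hlam.1 (Ne.symm hl0)
        have hlam1 : lam < 1 := lt_of_le_of_ne hlam.2 hl1
        rcases lt_or_gt_of_ne h01 with hlt | hlt
        · obtain ⟨e0, e1, haff⟩ := CE_argmin_structure hab hf hlam0 hlam1 hlt hx₀ hx₁ hx hmin
          refine Or.inr ⟨x₀, x₁, hx₀, hx₁, by nlinarith, by nlinarith, e0, e1, ?_, ?_⟩
          · exact hnf x₀ x₁ hx₀.1 hlt hx₁.2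
              ⟨_, _, fun y hy => haff y (Ioo_subset_Icc_self hy)⟩
          · have hxe : x - x₀ = lam * (x₁ - x₀) := by linarith [hx]
            rw [hxe]
            have hd : x₁ - x₀ ≠ 0 := by linarith
            field_simp
            ring
        · have hx' : (1 - (1 - lam)) * x₁ + (1 - lam) * x₀ = x := by linarith [hx]
          have hmin' : (1 - (1 - lam)) * f x₁ + (1 - lam) * f x₀ = convEnv a b f x := by
            rw [← hmin]; ring
          obtain ⟨e0, e1, haff⟩ := CE_argmin_structure hab hf (by linarith) (by linarith)
            hlt hx₁ hx₀ hx' hmin'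
          refine Or.inr ⟨x₁, x₀, hx₁, hx₀, by nlinarith, by nlinarith, e0, e1, ?_, ?_⟩
          · exact hnf x₁ x₀ hx₁.1 hlt hx₀.2
              ⟨_, _, fun y hy => haff y (Ioo_subset_Icc_self hy)⟩
          · have hxe : x - x₁ = (1 - lam) * (x₀ - x₁) := by linarith [hx]
            rw [hxe]
            have hd : x₀ - x₁ ≠ 0 := by linarith
            field_simp
            ring

noncomputable def Jfun (a b : ℝ) (f φ : ℝ → ℝ) (x : ℝ) : ℝ :=
  sInf {t : ℝ | ∃ lam x₀ x₁ : ℝ, lam ∈ Icc (0:ℝ) 1 ∧ x₀ ∈ Icc a b ∧ x₁ ∈ Icc a b ∧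
    (1 - lam) * x₀ + lam * x₁ = x ∧ (1 - lam) * f x₀ + lam * f x₁ = convEnv a b f x ∧
    t = (1 - lam) * φ x₀ + lam * φ x₁}

lemma CE_phi_unique (hab : a ≤ b) (hf : ContinuousOn f (Icc a b)) (hnf : NoFlat a b f)
    (φ : ℝ → ℝ) {x lam x₀ x₁ lam' y₀ y₁ : ℝ}
    (hlam : lam ∈ Icc (0:ℝ) 1) (hx₀ : x₀ ∈ Icc a b) (hx₁ : x₁ ∈ Icc a b)
    (hx : (1 - lam) * x₀ + lam * x₁ = x)
    (hmin : (1 - lam) * f x₀ + lam * f x₁ = convEnv a b f x)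
    (hlam' : lam' ∈ Icc (0:ℝ) 1) (hy₀ : y₀ ∈ Icc a b) (hy₁ : y₁ ∈ Icc a b)
    (hy : (1 - lam') * y₀ + lam' * y₁ = x)
    (hmin' : (1 - lam') * f y₀ + lam' * f y₁ = convEnv a b f x) :
    (1 - lam) * φ x₀ + lam * φ x₁ = (1 - lam') * φ y₀ + lam' * φ y₁ := by
  rcases CE_argmin_char hab hf hnf φ hlam hx₀ hx₁ hx hmin with ⟨hc, hv⟩ | ⟨u, w, hu, hw,
      hux, hxw, hcu, hcw, hlt, hv⟩ <;>
    rcases CE_argmin_char hab hf hnf φ hlam' hy₀ hy₁ hy hmin' with ⟨hc', hv'⟩ | ⟨u', w', hu',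
      hw', hux', hxw', hcu', hcw', hlt', hv'⟩
  · rw [hv, hv']
  · exact absurd hc (ne_of_lt (hlt' x ⟨hux', hxw'⟩))
  · exact absurd hc' (ne_of_lt (hlt x ⟨hux, hxw⟩))
  · have huu : u = u' := by
      rcases lt_trichotomy u u' with h | h | h
      · exact absurd hcu' (ne_of_lt (hlt u' ⟨h, lt_trans hux' hxw⟩))
      · exact h
      · exact absurd hcu (ne_of_lt (hlt' u ⟨h, lt_trans hux hxw'⟩))
    have hww : w = w' := by
      rcases lt_trichotomy w w' with h | h | h
      · exact absurd hcw (ne_of_lt (hlt' w ⟨lt_trans hux' hxw, h⟩))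
      · exact h
      · exact absurd hcw' (ne_of_lt (hlt w' ⟨lt_trans hux hxw', h⟩))
    rw [hv, hv', huu, hww]

lemma Jfun_eq_combo (hab : a ≤ b) (hf : ContinuousOn f (Icc a b)) (hnf : NoFlat a b f)
    (φ : ℝ → ℝ) {x lam x₀ x₁ : ℝ}
    (hlam : lam ∈ Icc (0:ℝ) 1) (hx₀ : x₀ ∈ Icc a b) (hx₁ : x₁ ∈ Icc a b)
    (hx : (1 - lam) * x₀ + lam * x₁ = x)
    (hmin : (1 - lam) * f x₀ + lam * f x₁ = convEnv a b f x) :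
    Jfun a b f φ x = (1 - lam) * φ x₀ + lam * φ x₁ := by
  have hset : {t : ℝ | ∃ lam' y₀ y₁ : ℝ, lam' ∈ Icc (0:ℝ) 1 ∧ y₀ ∈ Icc a b ∧ y₁ ∈ Icc a b ∧
      (1 - lam') * y₀ + lam' * y₁ = x ∧ (1 - lam') * f y₀ + lam' * f y₁ = convEnv a b f x ∧
      t = (1 - lam') * φ y₀ + lam' * φ y₁} = {(1 - lam) * φ x₀ + lam * φ x₁} := by
    apply Subset.antisymm
    · rintro t ⟨lam', y₀, y₁, h1, h2, h3, h4, h5, rfl⟩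
      exact (CE_phi_unique hab hf hnf φ h1 h2 h3 h4 h5 hlam hx₀ hx₁ hx hmin)
    · exact singleton_subset_iff.2 ⟨lam, x₀, x₁, hlam, hx₀, hx₁, hx, hmin, rfl⟩
  rw [Jfun, hset, csInf_singleton]

lemma Jfun_isJ (hab : a ≤ b) (hf : ContinuousOn f (Icc a b)) (hnf : NoFlat a b f)
    (φ : ℝ → ℝ) : IsJ a b f φ (Jfun a b f φ) := by
  constructor
  · intro x hx hfx
    obtain ⟨lam, x₀, x₁, hlam, hx₀, hx₁, hc, hmin⟩ := CE_attains hab hf hx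
    rw [Jfun_eq_combo hab hf hnf φ hlam hx₀ hx₁ hc hmin]
    rcases CE_argmin_char hab hf hnf φ hlam hx₀ hx₁ hc hmin with ⟨-, hv⟩ | ⟨u, w, -, -,
        hux, hxw, -, -, hlt, -⟩
    · exact hv
    · exact absurd hfx.symm (ne_of_lt (hlt x ⟨hux, hxw⟩))
  · intro c d hac hcd hdb hflt hcc hdc x hx
    have hxab : x ∈ Icc a b := ⟨hac.trans hx.1.le, hx.2.le.trans hdb⟩
    obtain ⟨lam, x₀, x₁, hlam, hx₀, hx₁, hc, hmin⟩ := CE_attains hab hf hxab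
    rw [Jfun_eq_combo hab hf hnf φ hlam hx₀ hx₁ hc hmin]
    rcases CE_argmin_char hab hf hnf φ hlam hx₀ hx₁ hc hmin with ⟨hcx, -⟩ | ⟨u, w, hu, hw,
        hux, hxw, hcu, hcw, hlt, hv⟩
    · exact absurd hcx (ne_of_lt (hflt x hx))
    · have huc : u = c := by
        rcases lt_trichotomy u c with h | h | h
        · rcases hcc with rfl | hcc
          · exact absurd hu.1 (not_le.2 h)
          · exact absurd hcc.symm (ne_of_lt (hlt c ⟨h, lt_trans hx.1 hxw⟩))
        · exact h
        · exact absurd hcu (ne_of_lt (hflt u ⟨h, lt_trans hux hx.2⟩))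
      have hwd : w = d := by
        rcases lt_trichotomy w d with h | h | h
        · exact absurd hcw (ne_of_lt (hflt w ⟨lt_trans hx.1 hxw, h⟩))
        · exact h
        · rcases hdc with rfl | hdc
          · exact absurd hw.2 (not_le.2 h)
          · exact absurd hdc.symm (ne_of_lt (hlt d ⟨lt_trans hux hx.2, h⟩))
      rw [hv, huc, hwd]

lemma CE_comboPhi_bound {M : ℝ} (hM : ∀ y, |φ y| ≤ M) {mu y₀ y₁ : ℝ} (hmu : mu ∈ Icc (0:ℝ) 1) :
    |(1 - mu) * φ y₀ + mu * φ y₁| ≤ M := by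
  have h0 := hM y₀
  have h1 := hM y₁
  have habs := abs_add_le ((1 - mu) * φ y₀) (mu * φ y₁)
  rw [abs_mul, abs_mul, abs_of_nonneg (by linarith [hmu.2] : (0:ℝ) ≤ 1 - mu),
    abs_of_nonneg hmu.1] at habs
  nlinarith [hmu.1, hmu.2, abs_nonneg (φ y₀), abs_nonneg (φ y₁)]

lemma CE_diff_bound (hab : a ≤ b) (hf : ContinuousOn f (Icc a b))
    (hφ : Continuous φ) {M : ℝ} (hM : ∀ y, |φ y| ≤ M) {x : ℝ} (hx : x ∈ Icc a b) (s : ℝ) :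
    |convEnv a b (fun y => f y + s * φ y) x - convEnv a b f x| ≤ |s| * M := by
  have hfs : ContinuousOn (fun y => f y + s * φ y) (Icc a b) :=
    hf.add (Continuous.continuousOn (by fun_prop))
  obtain ⟨lam, x₀, x₁, hlam, hx₀, hx₁, hc, hmin⟩ := CE_attains hab hf hx
  obtain ⟨mu, y₀, y₁, hmu, hy₀, hy₁, hcq, hminq⟩ := CE_attains hab hfs hx
  have hΦp := CE_comboPhi_bound hM (y₀ := x₀) (y₁ := x₁) hlam
  have hΦq := CE_comboPhi_bound hM (y₀ := y₀) (y₁ := y₁) hmu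
  have h1 : convEnv a b (fun y => f y + s * φ y) x ≤
      convEnv a b f x + s * ((1 - lam) * φ x₀ + lam * φ x₁) := by
    have h := CE_le_combo hab hfs hlam hx₀ hx₁ hc
    nlinarith [h, hmin]
  have h2 : convEnv a b f x + s * ((1 - mu) * φ y₀ + mu * φ y₁) ≤
      convEnv a b (fun y => f y + s * φ y) x := by
    have h := CE_le_combo hab hf hmu hy₀ hy₁ hcq
    have hminq := hminq
    nlinarith [h, hminq]
  have hb1 : s * ((1 - lam) * φ x₀ + lam * φ x₁) ≤ |s| * M := by
    calc s * ((1 - lam) * φ x₀ + lam * φ x₁) ≤ |s * ((1 - lam) * φ x₀ + lam * φ x₁)| :=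
          le_abs_self _
      _ = |s| * |(1 - lam) * φ x₀ + lam * φ x₁| := abs_mul _ _
      _ ≤ |s| * M := mul_le_mul_of_nonneg_left hΦp (abs_nonneg s)
  have hb2 : -(|s| * M) ≤ s * ((1 - mu) * φ y₀ + mu * φ y₁) := by
    have : |s * ((1 - mu) * φ y₀ + mu * φ y₁)| ≤ |s| * M := by
      rw [abs_mul]
      exact mul_le_mul_of_nonneg_left hΦq (abs_nonneg s)
    linarith [neg_abs_le (s * ((1 - mu) * φ y₀ + mu * φ y₁))]
  rw [abs_le]
  constructor <;> linarith

lemma CE_danskin (hab : a ≤ b) (hf : ContinuousOn f (Icc a b)) (hnf : NoFlat a b f)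
    (hφ : Continuous φ) {M : ℝ} (hM : ∀ y, |φ y| ≤ M) {x : ℝ} (hx : x ∈ Icc a b) :
    Tendsto (fun s : ℝ => (convEnv a b (fun y => f y + s * φ y) x - convEnv a b f x) / s)
      (𝓝[≠] (0:ℝ)) (𝓝 (Jfun a b f φ x)) := by
  obtain ⟨lam, x₀, x₁, hlam, hx₀, hx₁, hc, hmin⟩ := CE_attains hab hf hx
  set v := Jfun a b f φ x with hvdef
  have hv : v = (1 - lam) * φ x₀ + lam * φ x₁ :=
    Jfun_eq_combo hab hf hnf φ hlam hx₀ hx₁ hc hmin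
  have hM0 : 0 ≤ M := (abs_nonneg (φ x)).trans (hM x)
  have hvM : |v| ≤ M := by rw [hv]; exact CE_comboPhi_bound hM (y₀ := x₀) (y₁ := x₁) hlam
  have hfs : ∀ s : ℝ, ContinuousOn (fun y => f y + s * φ y) (Icc a b) := fun s =>
    hf.add (Continuous.continuousOn (by fun_prop))
  -- upper bound valid for every s
  have hupper : ∀ s : ℝ, convEnv a b (fun y => f y + s * φ y) x ≤ convEnv a b f x + s * v := by
    intro s
    have h := CE_le_combo hab (hfs s) hlam hx₀ hx₁ hc
    rw [hv]
    nlinarith [h, hmin]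
  -- the key ε-δ estimate
  rw [Metric.tendsto_nhdsWithin_nhds]
  intro ε hε
  -- Φ, the compact set of bad parameters
  set Φ : ℝ × ℝ × ℝ → ℝ := fun p => (1 - p.1) * φ p.2.1 + p.1 * φ p.2.2 with hΦdef
  have hΦcont : Continuous Φ := by fun_prop
  set B : Set (ℝ × ℝ × ℝ) := envK a b x ∩ {p | ε ≤ |Φ p - v|} with hBdef
  have hBclosed : IsClosed {p : ℝ × ℝ × ℝ | ε ≤ |Φ p - v|} :=
    isClosed_le continuous_const ((hΦcont.sub continuous_const).abs)
  have hBcompact : IsCompact B := (envK_compact a b x).inter_right hBclosed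
  -- a positive δ such that every E_s-minimizer with |s|<δ avoids B
  have key : ∃ δ > 0, ∀ p ∈ envK a b x,
      (1 - p.1) * f p.2.1 + p.1 * f p.2.2 - convEnv a b f x < δ → p ∉ B := by
    rcases eq_empty_or_nonempty B with hB | hB
    · exact ⟨1, one_pos, fun p _ _ hpB => by rw [hB] at hpB; exact hpB⟩
    · have hgcont : ContinuousOn
          (fun p : ℝ × ℝ × ℝ => (1 - p.1) * f p.2.1 + p.1 * f p.2.2 - convEnv a b f x) B :=
        ((CE_comboF_continuousOn hf).mono inter_subset_left).sub continuousOn_const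
      obtain ⟨pm, hpmB, hpmmin⟩ := hBcompact.exists_isMinOn hB hgcont
      set γ : ℝ := (1 - pm.1) * f pm.2.1 + pm.1 * f pm.2.2 - convEnv a b f x with hγdef
      have hγnonneg : 0 ≤ γ := by
        have := CE_le_combo hab hf hpmB.1.1 hpmB.1.2.1 hpmB.1.2.2.1 hpmB.1.2.2.2
        linarith
      have hγpos : 0 < γ := by
        rcases eq_or_lt_of_le hγnonneg with h | h
        · exfalso
          have hpmmin' : (1 - pm.1) * f pm.2.1 + pm.1 * f pm.2.2 = convEnv a b f x := by
            linarith [h.symm]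
          have : Jfun a b f φ x = Φ pm :=
            Jfun_eq_combo hab hf hnf φ hpmB.1.1 hpmB.1.2.1 hpmB.1.2.2.1 hpmB.1.2.2.2 hpmmin'
          have h2 := hpmB.2
          have hΦv : Φ pm = v := by rw [hvdef]; exact this.symm
          rw [mem_setOf_eq, hΦv] at h2
          simp at h2
          linarith
        · exact h
      refine ⟨γ, hγpos, fun p hp hlt hpB => ?_⟩
      have := hpmmin hpB
      simp only [hγdef] at this
      exact absurd hlt (not_lt.2 this)
  obtain ⟨γ, hγpos, hγ⟩ := key
  refine ⟨min 1 (γ / (M + |v| + 1)), lt_min one_pos (div_pos hγpos (by positivity)), ?_⟩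
  intro s hs hdist
  rw [Real.dist_eq, sub_zero] at hdist
  have hsne : s ≠ 0 := hs
  have hsabs : 0 < |s| := abs_pos.2 hsne
  -- minimizer of the perturbed envelope
  obtain ⟨mu, y₀, y₁, hmu, hy₀, hy₁, hcq, hminq⟩ := CE_attains hab (hfs s) hx
  set Φq : ℝ := (1 - mu) * φ y₀ + mu * φ y₁ with hΦqdef
  have hΦqM : |Φq| ≤ M := CE_comboPhi_bound hM (y₀ := y₀) (y₁ := y₁) hmu
  have hexp : (1 - mu) * f y₀ + mu * f y₁ + s * Φq
      = convEnv a b (fun y => f y + s * φ y) x := by rw [← hminq]; ring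
  have hEle : convEnv a b f x ≤ (1 - mu) * f y₀ + mu * f y₁ :=
    CE_le_combo hab hf hmu hy₀ hy₁ hcq
  -- the E_s-minimizer is not in B, hence |Φq - v| < ε
  have hΦqv : |Φq - v| < ε := by
    by_contra hcon
    push_neg at hcon
    have hpB : (mu, y₀, y₁) ∈ B := ⟨⟨hmu, hy₀, hy₁, hcq⟩, hcon⟩
    refine hγ (mu, y₀, y₁) ⟨hmu, hy₀, hy₁, hcq⟩ ?_ hpB
    -- g(q) = combo_f(q) - E x ≤ s(v - Φq) ≤ |s|(|v|+M) < γ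
    have h1 : (1 - mu) * f y₀ + mu * f y₁ - convEnv a b f x ≤ s * (v - Φq) := by
      have := hupper s
      nlinarith [hexp]
    have h2 : s * (v - Φq) ≤ |s| * (|v| + M) := by
      calc s * (v - Φq) ≤ |s * (v - Φq)| := le_abs_self _
        _ = |s| * |v - Φq| := abs_mul _ _
        _ ≤ |s| * (|v| + M) := by
            refine mul_le_mul_of_nonneg_left ?_ (abs_nonneg s)
            calc |v - Φq| ≤ |v| + |Φq| := abs_sub _ _
              _ ≤ |v| + M := by linarith
    have h3 : |s| * (|v| + M) < γ := by
      have hδ : |s| < γ / (M + |v| + 1) := lt_of_lt_of_le hdist (min_le_right _ _)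
      have : |s| * (M + |v| + 1) < γ := by
        rw [← lt_div_iff₀ (by positivity : (0:ℝ) < M + |v| + 1)]
        exact hδ
      nlinarith [abs_nonneg s, abs_nonneg v]
    linarith
  -- conclude
  have hub : convEnv a b (fun y => f y + s * φ y) x - convEnv a b f x - s * v ≤ 0 := by
    linarith [hupper s]
  have hlb : s * (Φq - v) ≤
      convEnv a b (fun y => f y + s * φ y) x - convEnv a b f x - s * v := by
    nlinarith [hexp, hEle]
  have hnumabs : |convEnv a b (fun y => f y + s * φ y) x - convEnv a b f x - s * v|
      ≤ |s| * |Φq - v| := by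
    rw [abs_le]
    constructor
    · have : -(|s| * |Φq - v|) ≤ s * (Φq - v) := by
        rw [← abs_mul]
        exact neg_abs_le _
      linarith
    · exact hub.trans (by positivity)
  rw [Real.dist_eq]
  have hrw : (convEnv a b (fun y => f y + s * φ y) x - convEnv a b f x) / s - v
      = (convEnv a b (fun y => f y + s * φ y) x - convEnv a b f x - s * v) / s := by
    field_simp
  rw [hrw, abs_div, div_lt_iff₀ hsabs]
  calc |convEnv a b (fun y => f y + s * φ y) x - convEnv a b f x - s * v|
      ≤ |s| * |Φq - v| := hnumabs
    _ < |s| * ε := mul_lt_mul_of_pos_left hΦqv hsabs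
    _ = ε * |s| := mul_comm _ _

lemma CE_phi_bound (hφ : Continuous φ) (hsupp : tsupport φ ⊆ Set.Ioo a b) :
    ∃ M : ℝ, ∀ y, |φ y| ≤ M := by
  rcases (tsupport φ).eq_empty_or_nonempty with he | hne
  · refine ⟨0, fun y => ?_⟩
    have : φ y = 0 := image_eq_zero_of_notMem_tsupport (by rw [he]; exact notMem_empty y)
    simp [this]
  · have hcs : IsCompact (tsupport φ) :=
      IsCompact.of_isClosed_subset isCompact_Icc (isClosed_tsupport φ)
        (hsupp.trans Ioo_subset_Icc_self)
    obtain ⟨z, hz, hzmax⟩ := hcs.exists_isMaxOn hne (continuous_abs.comp hφ).continuousOn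
    refine ⟨|φ z|, fun y => ?_⟩
    by_cases hy : y ∈ tsupport φ
    · exact hzmax hy
    · have : φ y = 0 := image_eq_zero_of_notMem_tsupport hy
      simp [this, abs_nonneg]


/-- Under condition (noflat), the functional `g ↦ ∫_a^b g**` is Gateaux
differentiable at `f`, with derivative `∫_a^b J^φ` in direction `φ`. -/
theorem convEnv_gateaux (a b : ℝ) (hab : a < b) (f : ℝ → ℝ)
    (hf : ContDiffOn ℝ 1 f (Set.Icc a b)) (hnf : NoFlat a b f)
    (φ : ℝ → ℝ) (hφ : ContDiff ℝ (⊤ : ℕ∞) φ) (hsupp : tsupport φ ⊆ Set.Ioo a b) :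
    ∃ J : ℝ → ℝ, IsJ a b f φ J ∧
      Filter.Tendsto
        (fun s : ℝ => ∫ x in a..b,
          (convEnv a b (fun y => f y + s * φ y) x - convEnv a b f x) / s)
        (𝓝[≠] (0:ℝ)) (𝓝 (∫ x in a..b, J x)) := by
  have hfc : ContinuousOn f (Icc a b) := hf.continuousOn
  have hφc : Continuous φ := hφ.continuous
  obtain ⟨M, hM⟩ := CE_phi_bound hφc hsupp
  refine ⟨Jfun a b f φ, Jfun_isJ hab.le hfc hnf φ, ?_⟩
  simp only [intervalIntegral.integral_of_le hab.le]
  have hfs : ∀ s : ℝ, ContinuousOn (fun y => f y + s * φ y) (Icc a b) := fun s =>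
    hfc.add (Continuous.continuousOn (by fun_prop))
  refine MeasureTheory.tendsto_integral_filter_of_dominated_convergence
    (μ := volume.restrict (Ioc a b)) (fun _ => M) ?_ ?_ ?_ ?_
  · refine Eventually.of_forall fun s => ?_
    have h1 : ContinuousOn
        (fun x => (convEnv a b (fun y => f y + s * φ y) x - convEnv a b f x) / s)
        (Ioo a b) :=
      ((CE_continuousOn hab.le (hfs s)).sub (CE_continuousOn hab.le hfc)).div_const s
    have h2 := h1.aestronglyMeasurable (μ := volume) measurableSet_Ioo
    rwa [Measure.restrict_congr_set Ioo_ae_eq_Ioc] at h2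
  · filter_upwards [self_mem_nhdsWithin] with s hs
    have hsne : s ≠ 0 := hs
    rw [ae_restrict_iff' measurableSet_Ioc]
    refine Eventually.of_forall fun x hx => ?_
    have hxI : x ∈ Icc a b := ⟨hx.1.le, hx.2⟩
    have hd := CE_diff_bound hab.le hfc hφc hM hxI s
    rw [Real.norm_eq_abs, abs_div, div_le_iff₀ (abs_pos.2 hsne)]
    linarith [hd, mul_comm (|s|) M]
  · exact integrableOn_const measure_Ioc_lt_top.ne
  · rw [ae_restrict_iff' measurableSet_Ioc]
    refine Eventually.of_forall fun x hx => ?_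
    exact CE_danskin hab.le hfc hnf hφc hM ⟨hx.1.le, hx.2⟩
end

section
/- Let u ∈ C¹([a,b]), Λ ∈ C¹(ℝ), and set f := Λ∘u. Assume f satisfies condition (noflat), and let Iⁱ = (aⁱ,bⁱ) be the maximal open intervals composing {x ∈ (a,b) : f(x) > f**(x)}. Then for every smooth function φ compactly supported in (a,b), lim_{s→0} ∫_a^b ([Λ(u+sφ)]** − [Λ(u)]**)/s dx = ∫_a^b G^{u,φ}(x) dx, where G^{u,φ}(x) = φ(x)Λ'(u(x)) for x outside the union of the Iⁱ, and G^{u,φ}(x) = φ(aⁱ)Λ'(u(aⁱ)) + ((φ(bⁱ)Λ'(u(bⁱ)) − φ(aⁱ)Λ'(u(aⁱ)))/(bⁱ−aⁱ))(x−aⁱ) for x ∈ Iⁱ. -/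
open Set MeasureTheory Filter Topology

/-- `G` is the function `G^{u,φ}` associated to `u`, `Λ` and `φ` (with `f = Λ ∘ u`):
it equals `φ · (Λ' ∘ u)` outside the union of the maximal open intervals `(c,d)` of
`{f > f**}`, and on each such interval it is the affine interpolation of the endpoint
values of `φ · (Λ' ∘ u)`. -/
def IsG (a b : ℝ) (u : ℝ → ℝ) (Λ : ℝ → ℝ) (φ G : ℝ → ℝ) : Prop :=
  (∀ x ∈ Set.Icc a b, Λ (u x) = convEnv a b (fun y => Λ (u y)) x →
      G x = φ x * deriv Λ (u x)) ∧
  ∀ c d : ℝ, a ≤ c → c < d → d ≤ b →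
    (∀ x ∈ Set.Ioo c d, convEnv a b (fun y => Λ (u y)) x < Λ (u x)) →
    (c = a ∨ Λ (u c) = convEnv a b (fun y => Λ (u y)) c) →
    (d = b ∨ Λ (u d) = convEnv a b (fun y => Λ (u y)) d) →
    ∀ x ∈ Set.Ioo c d,
      G x = φ c * deriv Λ (u c) +
        ((φ d * deriv Λ (u d) - φ c * deriv Λ (u c)) / (d - c)) * (x - c)

namespace CEaux

/-- representation triples -/
def reps (a b x : ℝ) : Set (ℝ × ℝ × ℝ) :=
  {p | p.1 ∈ Set.Icc (0:ℝ) 1 ∧ p.2.1 ∈ Set.Icc a b ∧ p.2.2 ∈ Set.Icc a b ∧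
    (1 - p.1) * p.2.1 + p.1 * p.2.2 = x}

def pval (f : ℝ → ℝ) (p : ℝ × ℝ × ℝ) : ℝ := (1 - p.1) * f p.2.1 + p.1 * f p.2.2

lemma convEnv_eq (a b x : ℝ) (f : ℝ → ℝ) :
    convEnv a b f x = sInf (pval f '' reps a b x) := by
  unfold convEnv
  congr 1
  ext y
  constructor
  · rintro ⟨lam, x₀, x₁, h1, h2, h3, h4, h5⟩
    exact ⟨(lam, x₀, x₁), ⟨h1, h2, h3, h4⟩, h5.symm⟩
  · rintro ⟨⟨lam, x₀, x₁⟩, ⟨h1, h2, h3, h4⟩, h5⟩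
    exact ⟨lam, x₀, x₁, h1, h2, h3, h4, h5.symm⟩

variable {a b : ℝ}

lemma reps_nonempty {x : ℝ} (hx : x ∈ Icc a b) : (reps a b x).Nonempty :=
  ⟨(0, x, x), ⟨left_mem_Icc.2 zero_le_one, hx, hx, by ring⟩⟩

lemma isCompact_reps (x : ℝ) : IsCompact (reps a b x) := by
  have hsub : reps a b x ⊆ (Icc (0:ℝ) 1) ×ˢ ((Icc a b) ×ˢ (Icc a b)) := by
    rintro ⟨lam, x₀, x₁⟩ ⟨h1, h2, h3, _⟩
    exact ⟨h1, h2, h3⟩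
  have hcl : IsClosed (reps a b x) := by
    have : reps a b x = (Icc (0:ℝ) 1 ×ˢ ((Icc a b) ×ˢ (Icc a b))) ∩
        {p : ℝ × ℝ × ℝ | (1 - p.1) * p.2.1 + p.1 * p.2.2 = x} := by
      ext ⟨lam, x₀, x₁⟩
      simp only [reps, mem_setOf_eq, mem_inter_iff, mem_prod]
      tauto
    rw [this]
    exact (isClosed_Icc.prod (isClosed_Icc.prod isClosed_Icc)).inter
      (isClosed_eq (by fun_prop) continuous_const)
  exact (isCompact_Icc.prod (isCompact_Icc.prod isCompact_Icc)).of_isClosed_subset hcl hsub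

lemma continuousOn_pval {f : ℝ → ℝ} (hf : ContinuousOn f (Icc a b)) (x : ℝ) :
    ContinuousOn (pval f) (reps a b x) := by
  have h1 : ContinuousOn (fun p : ℝ × ℝ × ℝ => f p.2.1) (reps a b x) := by
    apply hf.comp (continuous_fst.comp continuous_snd).continuousOn
    rintro ⟨lam, x₀, x₁⟩ ⟨_, h2, _, _⟩; exact h2
  have h2 : ContinuousOn (fun p : ℝ × ℝ × ℝ => f p.2.2) (reps a b x) := by
    apply hf.comp (continuous_snd.comp continuous_snd).continuousOn
    rintro ⟨lam, x₀, x₁⟩ ⟨_, _, h3, _⟩; exact h3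
  exact ((continuousOn_const.sub continuous_fst.continuousOn).mul h1).add
    (continuous_fst.continuousOn.mul h2)

/-- existence of a minimizing representation -/
lemma exists_min {f : ℝ → ℝ} (hf : ContinuousOn f (Icc a b)) {x : ℝ} (hx : x ∈ Icc a b) :
    ∃ p ∈ reps a b x, pval f p = convEnv a b f x ∧ ∀ q ∈ reps a b x, pval f p ≤ pval f q := by
  obtain ⟨p, hp, hmin⟩ := (isCompact_reps x).exists_isMinOn (reps_nonempty hx)
    (continuousOn_pval hf x)
  refine ⟨p, hp, ?_, fun q hq => hmin hq⟩
  rw [convEnv_eq]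
  apply le_antisymm
  · refine le_csInf ((reps_nonempty hx).image _) ?_
    rintro y ⟨q, hq, rfl⟩
    exact hmin hq
  · refine csInf_le ⟨pval f p, ?_⟩ ⟨p, hp, rfl⟩
    rintro y ⟨q, hq, rfl⟩
    exact hmin hq

lemma convEnv_le_pval {f : ℝ → ℝ} (hf : ContinuousOn f (Icc a b)) {x : ℝ} (hx : x ∈ Icc a b)
    {p : ℝ × ℝ × ℝ} (hp : p ∈ reps a b x) : convEnv a b f x ≤ pval f p := by
  obtain ⟨q, hq, heq, hmin⟩ := exists_min hf hx
  rw [← heq]; exact hmin p hp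

lemma convEnv_le_self {f : ℝ → ℝ} (hf : ContinuousOn f (Icc a b)) {x : ℝ} (hx : x ∈ Icc a b) :
    convEnv a b f x ≤ f x := by
  have := convEnv_le_pval hf hx (p := (0, x, x)) ⟨left_mem_Icc.2 zero_le_one, hx, hx, by ring⟩
  simpa [pval] using this

lemma convEnv_left (f : ℝ → ℝ) (hab : a ≤ b) : convEnv a b f a = f a := by
  rw [convEnv_eq]
  have himg : pval f '' reps a b a = {f a} := by
    apply Subset.antisymm
    · rintro y ⟨⟨lam, x₀, x₁⟩, ⟨⟨h0', h1'⟩, ⟨h2', _⟩, ⟨h3', _⟩, h4'⟩, rfl⟩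
      simp only [pval, mem_singleton_iff]
      have h0 : (0:ℝ) ≤ lam := h0'
      have h1 : lam ≤ 1 := h1'
      have h2 : a ≤ x₀ := h2'
      have h3 : a ≤ x₁ := h3'
      have h4 : (1 - lam) * x₀ + lam * x₁ = a := h4'
      rcases eq_or_lt_of_le h0 with h|h
      · have hl : lam = 0 := h.symm
        have : x₀ = a := by nlinarith
        rw [hl, this]; ring
      rcases eq_or_lt_of_le h1 with h'|h'
      · have hl : lam = 1 := h'
        have : x₁ = a := by nlinarith
        rw [hl, this]; ring
      · have hx₀ : x₀ = a := by nlinarith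
        have hx₁ : x₁ = a := by nlinarith
        rw [hx₀, hx₁]; ring
    · rintro y rfl
      exact ⟨(0, a, a), ⟨left_mem_Icc.2 zero_le_one, left_mem_Icc.2 hab,
        left_mem_Icc.2 hab, by ring⟩, by simp [pval]⟩
  rw [himg, csInf_singleton]

lemma convEnv_right (f : ℝ → ℝ) (hab : a ≤ b) : convEnv a b f b = f b := by
  rw [convEnv_eq]
  have himg : pval f '' reps a b b = {f b} := by
    apply Subset.antisymm
    · rintro y ⟨⟨lam, x₀, x₁⟩, ⟨⟨h0', h1'⟩, ⟨_, h2'⟩, ⟨_, h3'⟩, h4'⟩, rfl⟩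
      simp only [pval, mem_singleton_iff]
      have h0 : (0:ℝ) ≤ lam := h0'
      have h1 : lam ≤ 1 := h1'
      have h2 : x₀ ≤ b := h2'
      have h3 : x₁ ≤ b := h3'
      have h4 : (1 - lam) * x₀ + lam * x₁ = b := h4'
      rcases eq_or_lt_of_le h0 with h|h
      · have hl : lam = 0 := h.symm
        have : x₀ = b := by nlinarith
        rw [hl, this]; ring
      rcases eq_or_lt_of_le h1 with h'|h'
      · have hl : lam = 1 := h'
        have : x₁ = b := by nlinarith
        rw [hl, this]; ring
      · have hx₀ : x₀ = b := by nlinarith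
        have hx₁ : x₁ = b := by nlinarith
        rw [hx₀, hx₁]; ring
    · rintro y rfl
      exact ⟨(0, b, b), ⟨left_mem_Icc.2 zero_le_one, right_mem_Icc.2 hab,
        right_mem_Icc.2 hab, by ring⟩, by simp [pval]⟩
  rw [himg, csInf_singleton]

/-- sup-norm Lipschitz property of the envelope -/
lemma convEnv_diff_le {f₁ f₂ : ℝ → ℝ} (hf₁ : ContinuousOn f₁ (Icc a b))
    (hf₂ : ContinuousOn f₂ (Icc a b)) {C : ℝ}
    (h : ∀ t ∈ Icc a b, |f₁ t - f₂ t| ≤ C) {x : ℝ} (hx : x ∈ Icc a b) :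
    |convEnv a b f₁ x - convEnv a b f₂ x| ≤ C := by
  have key : ∀ (g₁ g₂ : ℝ → ℝ), ContinuousOn g₁ (Icc a b) → ContinuousOn g₂ (Icc a b) →
      (∀ t ∈ Icc a b, |g₁ t - g₂ t| ≤ C) →
      convEnv a b g₁ x - convEnv a b g₂ x ≤ C := by
    intro g₁ g₂ hg₁ hg₂ hg
    obtain ⟨⟨lam, x₀, x₁⟩, hp, heq, _⟩ := exists_min hg₂ hx
    have h1 : convEnv a b g₁ x ≤ pval g₁ (lam, x₀, x₁) := convEnv_le_pval hg₁ hx hp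
    have h2 : pval g₁ (lam, x₀, x₁) - pval g₂ (lam, x₀, x₁) ≤ C := by
      obtain ⟨⟨hl0, hl1⟩, h2, h3, _⟩ := hp
      have e0 := hg x₀ h2
      have e1 := hg x₁ h3
      have a0 := abs_le.1 e0
      have a1 := abs_le.1 e1
      simp only [pval]
      nlinarith
    rw [← heq]; linarith
  rw [abs_sub_le_iff]
  exact ⟨key f₁ f₂ hf₁ hf₂ h, key f₂ f₁ hf₂ hf₁ (fun t ht => by rw [abs_sub_comm]; exact h t ht)⟩


/-- a line below `f` on `[a,b]` is below the convex envelope -/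
lemma line_le_convEnv {f : ℝ → ℝ} {k y₀ x : ℝ}
    (hline : ∀ t ∈ Icc a b, y₀ + k * (t - x) ≤ f t) {w : ℝ} (hw : w ∈ Icc a b) :
    y₀ + k * (w - x) ≤ convEnv a b f w := by
  rw [convEnv_eq]
  refine le_csInf ((reps_nonempty hw).image _) ?_
  rintro y ⟨⟨lam, x₀, x₁⟩, ⟨⟨h0, h1⟩, h2, h3, h4⟩, rfl⟩
  have h4' : (1 - lam) * x₀ + lam * x₁ = w := h4
  have l0 := hline x₀ h2
  have l1 := hline x₁ h3
  simp only [pval]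
  have e : y₀ + k * (w - x) = (1 - lam) * (y₀ + k * (x₀ - x)) + lam * (y₀ + k * (x₁ - x)) := by
    linear_combination (-k) * h4'
  rw [e]
  exact add_le_add (mul_le_mul_of_nonneg_left l0 (by linarith)) (mul_le_mul_of_nonneg_left l1 h0)

lemma minorant_left (hab : a < b) {f : ℝ → ℝ} (hf : ContinuousOn f (Icc a b))
    {ε : ℝ} (hε : 0 < ε) : ∃ k, ∀ t ∈ Icc a b, (f a - ε) + k * (t - a) ≤ f t := by
  have hca : ContinuousWithinAt f (Icc a b) a := hf a (left_mem_Icc.2 hab.le)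
  rw [ContinuousWithinAt, Metric.tendsto_nhdsWithin_nhds] at hca
  obtain ⟨δ, hδ, hδ'⟩ := hca ε hε
  obtain ⟨tm, htm, hm⟩ := isCompact_Icc.exists_isMinOn ⟨a, left_mem_Icc.2 hab.le⟩ hf
  set m := f tm with hmdef
  refine ⟨min 0 ((m - f a) / δ), fun t ht => ?_⟩
  have hk0 : min 0 ((m - f a) / δ) ≤ 0 := min_le_left _ _
  have hk1 : min 0 ((m - f a) / δ) ≤ (m - f a) / δ := min_le_right _ _
  have hta : 0 ≤ t - a := by linarith [ht.1]
  rcases lt_or_ge (t - a) δ with h | h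
  · have : dist t a < δ := by rw [Real.dist_eq, abs_of_nonneg hta]; exact h
    have := hδ' ht this
    rw [Real.dist_eq, abs_lt] at this
    nlinarith
  · have h1 : min 0 ((m - f a) / δ) * (t - a) ≤ min 0 ((m - f a) / δ) * δ :=
      mul_le_mul_of_nonpos_left h hk0
    have h2 : min 0 ((m - f a) / δ) * δ ≤ m - f a := by
      have := mul_le_mul_of_nonneg_right hk1 hδ.le
      rwa [div_mul_cancel₀ _ (ne_of_gt hδ)] at this
    have h3 : m ≤ f t := hm ht
    linarith

lemma minorant_right (hab : a < b) {f : ℝ → ℝ} (hf : ContinuousOn f (Icc a b))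
    {ε : ℝ} (hε : 0 < ε) : ∃ k, ∀ t ∈ Icc a b, (f b - ε) + k * (t - b) ≤ f t := by
  have hca : ContinuousWithinAt f (Icc a b) b := hf b (right_mem_Icc.2 hab.le)
  rw [ContinuousWithinAt, Metric.tendsto_nhdsWithin_nhds] at hca
  obtain ⟨δ, hδ, hδ'⟩ := hca ε hε
  obtain ⟨tm, htm, hm⟩ := isCompact_Icc.exists_isMinOn ⟨a, left_mem_Icc.2 hab.le⟩ hf
  set m := f tm with hmdef
  refine ⟨max 0 ((f b - m) / δ), fun t ht => ?_⟩
  have hk0 : (0:ℝ) ≤ max 0 ((f b - m) / δ) := le_max_left _ _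
  have hk1 : (f b - m) / δ ≤ max 0 ((f b - m) / δ) := le_max_right _ _
  have htb : t - b ≤ 0 := by linarith [ht.2]
  rcases lt_or_ge (b - t) δ with h | h
  · have : dist t b < δ := by rw [Real.dist_eq, abs_sub_comm, abs_of_nonneg (by linarith)]; exact h
    have := hδ' ht this
    rw [Real.dist_eq, abs_lt] at this
    nlinarith
  · have h1 : max 0 ((f b - m) / δ) * (t - b) ≤ max 0 ((f b - m) / δ) * (-δ) :=
      mul_le_mul_of_nonneg_left (by linarith) hk0
    have h2 : (f b - m) ≤ max 0 ((f b - m) / δ) * δ := by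
      have := mul_le_mul_of_nonneg_right hk1 hδ.le
      rwa [div_mul_cancel₀ _ (ne_of_gt hδ)] at this
    have h3 : m ≤ f t := hm ht
    nlinarith

/-- supporting slope at an interior contact point -/
lemma support_line_contact (hab : a < b) {f : ℝ → ℝ} (hf : ContinuousOn f (Icc a b))
    {x : ℝ} (hx : x ∈ Ioo a b) (heq : convEnv a b f x = f x) :
    ∃ k, ∀ t ∈ Icc a b, f x + k * (t - x) ≤ f t := by
  have pairwise : ∀ t₀ ∈ Ico a x, ∀ t₁ ∈ Ioc x b,
      (f x - f t₀) / (x - t₀) ≤ (f t₁ - f x) / (t₁ - x) := by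
    intro t₀ ht₀ t₁ ht₁
    have h1 : t₀ < x := ht₀.2
    have h2 : x < t₁ := ht₁.1
    set lam := (x - t₀) / (t₁ - t₀) with hlam
    have hd : (0:ℝ) < t₁ - t₀ := by linarith
    have hlam0 : 0 ≤ lam := div_nonneg (by linarith) hd.le
    have hlam1 : lam ≤ 1 := by rw [div_le_one hd]; linarith
    have hsum : (1 - lam) * t₀ + lam * t₁ = x := by rw [hlam]; field_simp [hd.ne']; ring
    have hle : convEnv a b f x ≤ (1 - lam) * f t₀ + lam * f t₁ := by
      have := convEnv_le_pval hf (Ioo_subset_Icc_self hx) (p := (lam, t₀, t₁))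
        ⟨⟨hlam0, hlam1⟩, ⟨ht₀.1, by linarith [hx.2]⟩, ⟨by linarith [hx.1], ht₁.2⟩, hsum⟩
      simpa [pval] using this
    rw [heq] at hle
    rw [div_le_div_iff₀ (by linarith) (by linarith)]
    have hlam' : lam = (x - t₀) / (t₁ - t₀) := hlam
    have hlv : lam * (t₁ - t₀) = x - t₀ := by
      rw [hlam']; field_simp
    have e1 : (1 - lam) * (t₁ - t₀) = t₁ - x := by linarith
    have h' := mul_le_mul_of_nonneg_right hle (le_of_lt hd)
    have h'' : f x * (t₁ - t₀) ≤ (t₁ - x) * f t₀ + (x - t₀) * f t₁ := by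
      calc f x * (t₁ - t₀) ≤ ((1 - lam) * f t₀ + lam * f t₁) * (t₁ - t₀) := h'
        _ = ((1 - lam) * (t₁ - t₀)) * f t₀ + (lam * (t₁ - t₀)) * f t₁ := by ring
        _ = (t₁ - x) * f t₀ + (x - t₀) * f t₁ := by rw [e1, hlv]
    nlinarith [h'']
  have hSL : ((fun t => (f x - f t) / (x - t)) '' Ico a x).Nonempty :=
    ⟨_, ⟨a, ⟨le_refl a, hx.1⟩, rfl⟩⟩
  have hbdd : BddAbove ((fun t => (f x - f t) / (x - t)) '' Ico a x) := by
    refine ⟨(f b - f x) / (b - x), ?_⟩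
    rintro y ⟨t, ht, rfl⟩
    exact pairwise t ht b ⟨hx.2, le_refl b⟩
  set k := sSup ((fun t => (f x - f t) / (x - t)) '' Ico a x) with hk
  refine ⟨k, fun t ht => ?_⟩
  rcases lt_trichotomy t x with h | h | h
  · have hmem : (f x - f t) / (x - t) ≤ k := le_csSup hbdd ⟨t, ⟨ht.1, h⟩, rfl⟩
    rw [div_le_iff₀ (by linarith)] at hmem
    linarith
  · simp [h]
  · have hle : k ≤ (f t - f x) / (t - x) := by
      apply csSup_le hSL
      rintro y ⟨t₀, ht₀, rfl⟩
      exact pairwise t₀ ht₀ t ⟨h, ht.2⟩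
    rw [le_div_iff₀ (by linarith)] at hle
    linarith

/-- supporting line at a non-contact point via the optimal representation -/
lemma support_line_of_opt {f : ℝ → ℝ} (hf : ContinuousOn f (Icc a b))
    {x lam x₀ x₁ : ℝ} (hx : x ∈ Icc a b) (hlam : lam ∈ Ioo (0:ℝ) 1)
    (hx₀ : x₀ ∈ Icc a b) (hx₁ : x₁ ∈ Icc a b) (hlt : x₀ < x₁)
    (hsum : (1 - lam) * x₀ + lam * x₁ = x)
    (hopt : (1 - lam) * f x₀ + lam * f x₁ = convEnv a b f x) :
    ∀ t ∈ Icc a b, convEnv a b f x + ((f x₁ - f x₀) / (x₁ - x₀)) * (t - x) ≤ f t := by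
  set k := (f x₁ - f x₀) / (x₁ - x₀) with hkdef
  set E := convEnv a b f x with hE
  have hd : (0:ℝ) < x₁ - x₀ := by linarith
  have hkv : k * (x₁ - x₀) = f x₁ - f x₀ := by rw [hkdef]; field_simp
  have hx₀x : x₀ < x := by nlinarith [hlam.1, hlam.2]
  have hxx₁ : x < x₁ := by nlinarith [hlam.1, hlam.2]
  have hxm : x - x₀ = lam * (x₁ - x₀) := by linarith [hsum]
  have h1 : E = f x₀ + k * (x - x₀) := by
    rw [← hopt]
    linear_combination (-lam) * hkv - k * hxm
  -- line identities: E + k*(w - x) = f x₀ + k*(w - x₀) for all w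
  have hlineid : ∀ w : ℝ, E + k * (w - x) = f x₀ + k * (w - x₀) := by
    intro w; rw [h1]; ring
  have hlx₁ : E + k * (x₁ - x) = f x₁ := by
    rw [hlineid x₁]
    linear_combination hkv
  intro t ht
  by_contra hcon
  push_neg at hcon
  rcases lt_trichotomy t x with h | h | h
  · -- use representation (mu, t, x₁)
    set mu := (x - t) / (x₁ - t) with hmu
    have hdt : (0:ℝ) < x₁ - t := by linarith
    have hmu0 : 0 < mu := div_pos (by linarith) hdt
    have hmu1 : mu < 1 := by rw [div_lt_one hdt]; linarith
    have hsum' : (1 - mu) * t + mu * x₁ = x := by rw [hmu]; field_simp [hdt.ne']; ring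
    have hle : E ≤ (1 - mu) * f t + mu * f x₁ := by
      have := convEnv_le_pval hf hx (p := (mu, t, x₁)) ⟨⟨hmu0.le, hmu1.le⟩, ht, hx₁, hsum'⟩
      simpa [pval, hE] using this
    -- but (1-mu) f t + mu f x₁ < E
    have hkey : k * ((1 - mu) * (t - x)) + k * (mu * (x₁ - x)) = 0 := by
      have : (1 - mu) * (t - x) + mu * (x₁ - x) = 0 := by linarith [hsum']
      linear_combination k * this
    nlinarith [mul_lt_mul_of_pos_left hcon (by linarith : (0:ℝ) < 1 - mu),
      mul_le_mul_of_nonneg_left hlx₁.le hmu0.le, hkey, hle]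
  · rw [h] at hcon
    simp at hcon
    have := convEnv_le_self hf hx
    rw [← hE] at this
    linarith
  · -- use representation (mu, x₀, t)
    set mu := (x - x₀) / (t - x₀) with hmu
    have hdt : (0:ℝ) < t - x₀ := by linarith
    have hmu0 : 0 < mu := div_pos (by linarith) hdt
    have hmu1 : mu < 1 := by rw [div_lt_one hdt]; linarith
    have hsum' : (1 - mu) * x₀ + mu * t = x := by rw [hmu]; field_simp [hdt.ne']; ring
    have hle : E ≤ (1 - mu) * f x₀ + mu * f t := by
      have := convEnv_le_pval hf hx (p := (mu, x₀, t)) ⟨⟨hmu0.le, hmu1.le⟩, hx₀, ht, hsum'⟩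
      simpa [pval, hE] using this
    have hlx₀ : E + k * (x₀ - x) = f x₀ := by rw [hlineid x₀]; ring
    have hkey : k * ((1 - mu) * (x₀ - x)) + k * (mu * (t - x)) = 0 := by
      have : (1 - mu) * (x₀ - x) + mu * (t - x) = 0 := by linarith [hsum']
      linear_combination k * this
    nlinarith [mul_lt_mul_of_pos_left hcon hmu0,
      mul_le_mul_of_nonneg_left hlx₀.le (by linarith : (0:ℝ) ≤ 1 - mu), hkey, hle]


/-- approximate supporting line at every point of `[a,b]` -/
lemma exists_minorant (hab : a < b) {f : ℝ → ℝ} (hf : ContinuousOn f (Icc a b))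
    {x : ℝ} (hx : x ∈ Icc a b) {ε : ℝ} (hε : 0 < ε) :
    ∃ k y₀, (∀ t ∈ Icc a b, y₀ + k * (t - x) ≤ f t) ∧ convEnv a b f x - ε ≤ y₀ := by
  by_cases heq : convEnv a b f x = f x
  · rcases eq_or_lt_of_le hx.1 with h | h₁
    · -- x = a
      obtain ⟨k, hk⟩ := minorant_left hab hf hε
      refine ⟨k, f a - ε, by rw [← h]; exact hk, ?_⟩
      rw [← h, convEnv_left f hab.le]
    rcases eq_or_lt_of_le hx.2 with h | h₂
    · obtain ⟨k, hk⟩ := minorant_right hab hf hε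
      refine ⟨k, f b - ε, by rw [h]; exact hk, ?_⟩
      rw [h, convEnv_right f hab.le]
    · obtain ⟨k, hk⟩ := support_line_contact hab hf ⟨h₁, h₂⟩ heq
      exact ⟨k, f x, hk, by rw [heq]; linarith⟩
  · have hlt : convEnv a b f x < f x := lt_of_le_of_ne (convEnv_le_self hf hx) heq
    obtain ⟨⟨lam, x₀, x₁⟩, hp, hpe, _⟩ := exists_min hf hx
    obtain ⟨⟨h0, h1⟩, h2, h3, h4⟩ := hp
    have h4' : (1 - lam) * x₀ + lam * x₁ = x := h4
    have hpe' : (1 - lam) * f x₀ + lam * f x₁ = convEnv a b f x := hpe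
    have hlam0 : 0 < lam := by
      rcases eq_or_lt_of_le h0 with h | h
      · exfalso
        have hl : lam = 0 := h.symm
        have hx₀ : x₀ = x := by rw [hl] at h4'; linarith
        rw [hl, hx₀] at hpe'
        simp at hpe'
        linarith
      · exact h
    have hlam1 : lam < 1 := by
      rcases eq_or_lt_of_le h1 with h | h
      · exfalso
        have hl : lam = 1 := h
        have hx₁ : x₁ = x := by rw [hl] at h4'; linarith
        rw [hl, hx₁] at hpe'
        simp at hpe'
        linarith
      · exact h
    have hne : x₀ ≠ x₁ := by
      intro h
      rw [h] at hpe' h4'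
      have hx₁ : x₁ = x := by linarith
      rw [hx₁] at hpe'
      have : f x = convEnv a b f x := by linarith
      linarith
    rcases hne.lt_or_gt with hlt' | hlt'
    · have := support_line_of_opt hf hx ⟨hlam0, hlam1⟩ h2 h3 hlt' h4' hpe'
      exact ⟨_, convEnv a b f x, this, by linarith⟩
    · have hsum2 : (1 - (1 - lam)) * x₁ + (1 - lam) * x₀ = x := by linarith
      have hopt2 : (1 - (1 - lam)) * f x₁ + (1 - lam) * f x₀ = convEnv a b f x := by linarith
      have := support_line_of_opt hf hx (lam := 1 - lam) ⟨by linarith, by linarith⟩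
        h3 h2 hlt' hsum2 hopt2
      exact ⟨_, convEnv a b f x, this, by linarith⟩

lemma convexOn_convEnv (hab : a < b) {f : ℝ → ℝ} (hf : ContinuousOn f (Icc a b)) :
    ConvexOn ℝ (Icc a b) (convEnv a b f) := by
  refine ⟨convex_Icc a b, fun y hy z hz α β hα hβ hαβ => ?_⟩
  simp only [smul_eq_mul]
  have hx : α * y + β * z ∈ Icc a b := by
    have := (convex_Icc a b) hy hz hα hβ hαβ
    simpa using this
  set x := α * y + β * z with hxdef
  refine le_of_forall_pos_le_add fun ε hε => ?_
  obtain ⟨k, y₀, hline, hy₀⟩ := exists_minorant hab hf hx hε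
  have l1 := line_le_convEnv (a := a) (b := b) hline hy
  have l2 := line_le_convEnv (a := a) (b := b) hline hz
  have hx' : x = α * y + β * z := hxdef
  have e : α * (y₀ + k * (y - x)) + β * (y₀ + k * (z - x)) = y₀ := by
    linear_combination (y₀ - k * x) * hαβ - k * hx'
  have := add_le_add (mul_le_mul_of_nonneg_left l1 hα) (mul_le_mul_of_nonneg_left l2 hβ)
  rw [e] at this
  linarith

lemma continuousWithinAt_convEnv_left (hab : a < b) {f : ℝ → ℝ}
    (hf : ContinuousOn f (Icc a b)) :
    ContinuousWithinAt (convEnv a b f) (Icc a b) a := by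
  rw [ContinuousWithinAt, Metric.tendsto_nhdsWithin_nhds]
  intro ε hε
  have hxa : a ∈ Icc a b := left_mem_Icc.2 hab.le
  have hca : ContinuousWithinAt f (Icc a b) a := hf a hxa
  rw [ContinuousWithinAt, Metric.tendsto_nhdsWithin_nhds] at hca
  obtain ⟨δ₁, hδ₁, hδ₁'⟩ := hca (ε/4) (by linarith)
  obtain ⟨k, y₀, hline, hy₀⟩ := exists_minorant hab hf hxa (ε := ε/4) (by linarith)
  refine ⟨min δ₁ (ε/(4*(|k|+1))), lt_min hδ₁ (by positivity), fun {t} ht hdist => ?_⟩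
  have hd1 : dist t a < δ₁ := lt_of_lt_of_le hdist (min_le_left _ _)
  have hd2 : dist t a < ε/(4*(|k|+1)) := lt_of_lt_of_le hdist (min_le_right _ _)
  have hup : convEnv a b f t ≤ f t := convEnv_le_self hf ht
  have hft := hδ₁' ht hd1
  rw [Real.dist_eq, abs_lt] at hft
  have hEa : convEnv a b f a = f a := convEnv_left f hab.le
  have hlow : y₀ + k * (t - a) ≤ convEnv a b f t := line_le_convEnv hline ht
  have habs : -(|k| * |t - a|) ≤ k * (t - a) := by
    rw [← abs_mul]; exact neg_abs_le _
  have hkb : |k| * |t - a| ≤ ε/4 := by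
    rw [Real.dist_eq] at hd2
    have h1 : |k| * |t - a| ≤ |k| * (ε/(4*(|k|+1))) :=
      mul_le_mul_of_nonneg_left hd2.le (abs_nonneg k)
    have h2 : |k| * (ε/(4*(|k|+1))) ≤ ε/4 := by
      rw [← mul_div_assoc, div_le_div_iff₀ (by positivity) (by norm_num : (0:ℝ) < 4)]
      nlinarith [abs_nonneg k]
    linarith
  rw [Real.dist_eq, abs_lt]
  constructor <;> nlinarith

lemma continuousWithinAt_convEnv_right (hab : a < b) {f : ℝ → ℝ}
    (hf : ContinuousOn f (Icc a b)) :
    ContinuousWithinAt (convEnv a b f) (Icc a b) b := by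
  rw [ContinuousWithinAt, Metric.tendsto_nhdsWithin_nhds]
  intro ε hε
  have hxb : b ∈ Icc a b := right_mem_Icc.2 hab.le
  have hca : ContinuousWithinAt f (Icc a b) b := hf b hxb
  rw [ContinuousWithinAt, Metric.tendsto_nhdsWithin_nhds] at hca
  obtain ⟨δ₁, hδ₁, hδ₁'⟩ := hca (ε/4) (by linarith)
  obtain ⟨k, y₀, hline, hy₀⟩ := exists_minorant hab hf hxb (ε := ε/4) (by linarith)
  refine ⟨min δ₁ (ε/(4*(|k|+1))), lt_min hδ₁ (by positivity), fun {t} ht hdist => ?_⟩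
  have hd1 : dist t b < δ₁ := lt_of_lt_of_le hdist (min_le_left _ _)
  have hd2 : dist t b < ε/(4*(|k|+1)) := lt_of_lt_of_le hdist (min_le_right _ _)
  have hup : convEnv a b f t ≤ f t := convEnv_le_self hf ht
  have hft := hδ₁' ht hd1
  rw [Real.dist_eq, abs_lt] at hft
  have hEb : convEnv a b f b = f b := convEnv_right f hab.le
  have hlow : y₀ + k * (t - b) ≤ convEnv a b f t := line_le_convEnv hline ht
  have habs : -(|k| * |t - b|) ≤ k * (t - b) := by
    rw [← abs_mul]; exact neg_abs_le _
  have hkb : |k| * |t - b| ≤ ε/4 := by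
    rw [Real.dist_eq] at hd2
    have h1 : |k| * |t - b| ≤ |k| * (ε/(4*(|k|+1))) :=
      mul_le_mul_of_nonneg_left hd2.le (abs_nonneg k)
    have h2 : |k| * (ε/(4*(|k|+1))) ≤ ε/4 := by
      rw [← mul_div_assoc, div_le_div_iff₀ (by positivity) (by norm_num : (0:ℝ) < 4)]
      nlinarith [abs_nonneg k]
    linarith
  rw [Real.dist_eq, abs_lt]
  constructor <;> nlinarith

lemma continuousOn_convEnv (hab : a < b) {f : ℝ → ℝ} (hf : ContinuousOn f (Icc a b)) :
    ContinuousOn (convEnv a b f) (Icc a b) := by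
  have hconv := convexOn_convEnv hab hf
  have hIoo : ContinuousOn (convEnv a b f) (Ioo a b) :=
    (hconv.subset Ioo_subset_Icc_self (convex_Ioo a b)).continuousOn isOpen_Ioo
  intro x hx
  rcases eq_or_lt_of_le hx.1 with h | h₁
  · rw [← h]
    exact continuousWithinAt_convEnv_left hab hf
  rcases eq_or_lt_of_le hx.2 with h | h₂
  · rw [h]
    exact continuousWithinAt_convEnv_right hab hf
  · exact (hIoo.continuousAt (Ioo_mem_nhds h₁ h₂)).continuousWithinAt


/-- the contact set -/
def contact (a b : ℝ) (f : ℝ → ℝ) : Set ℝ := {t ∈ Icc a b | convEnv a b f t = f t}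

lemma isClosed_contact (hab : a < b) {f : ℝ → ℝ} (hf : ContinuousOn f (Icc a b)) :
    IsClosed (contact a b f) := by
  have hE := continuousOn_convEnv hab hf
  have : contact a b f = Icc a b ∩ (fun t => convEnv a b f t - f t) ⁻¹' {0} := by
    ext t
    simp only [contact, mem_inter_iff, mem_sep_iff, mem_preimage, mem_singleton_iff]
    constructor
    · rintro ⟨h1, h2⟩; exact ⟨h1, by linarith⟩
    · rintro ⟨h1, h2⟩; exact ⟨h1, by linarith⟩
  rw [this]
  exact (hE.sub hf).preimage_isClosed_of_isClosed isClosed_Icc isClosed_singleton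

lemma left_mem_contact (hab : a < b) (f : ℝ → ℝ) : a ∈ contact a b f :=
  ⟨left_mem_Icc.2 hab.le, convEnv_left f hab.le⟩

lemma right_mem_contact (hab : a < b) (f : ℝ → ℝ) : b ∈ contact a b f :=
  ⟨right_mem_Icc.2 hab.le, convEnv_right f hab.le⟩

/-- left endpoint of the maximal non-contact interval containing `x` -/
noncomputable def lEnd (a b : ℝ) (f : ℝ → ℝ) (x : ℝ) : ℝ :=
  sSup (contact a b f ∩ Icc a x)

noncomputable def rEnd (a b : ℝ) (f : ℝ → ℝ) (x : ℝ) : ℝ :=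
  sInf (contact a b f ∩ Icc x b)

lemma lEnd_spec (hab : a < b) {f : ℝ → ℝ} (hf : ContinuousOn f (Icc a b))
    {x : ℝ} (hx : x ∈ Icc a b) (hne : convEnv a b f x ≠ f x) :
    lEnd a b f x ∈ contact a b f ∧ a ≤ lEnd a b f x ∧ lEnd a b f x < x := by
  have hne' : x ∉ contact a b f := fun h => hne h.2
  have hnonempty : (contact a b f ∩ Icc a x).Nonempty :=
    ⟨a, left_mem_contact hab f, left_mem_Icc.2 hx.1⟩
  have hbdd : BddAbove (contact a b f ∩ Icc a x) :=
    ⟨x, fun t ht => ht.2.2⟩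
  have hclosed : IsClosed (contact a b f ∩ Icc a x) :=
    (isClosed_contact hab hf).inter isClosed_Icc
  have hmem := hclosed.csSup_mem hnonempty hbdd
  refine ⟨hmem.1, hmem.2.1, lt_of_le_of_ne hmem.2.2 ?_⟩
  intro h
  exact hne' (h ▸ hmem.1)

lemma rEnd_spec (hab : a < b) {f : ℝ → ℝ} (hf : ContinuousOn f (Icc a b))
    {x : ℝ} (hx : x ∈ Icc a b) (hne : convEnv a b f x ≠ f x) :
    rEnd a b f x ∈ contact a b f ∧ rEnd a b f x ≤ b ∧ x < rEnd a b f x := by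
  have hne' : x ∉ contact a b f := fun h => hne h.2
  have hnonempty : (contact a b f ∩ Icc x b).Nonempty :=
    ⟨b, right_mem_contact hab f, right_mem_Icc.2 hx.2⟩
  have hbdd : BddBelow (contact a b f ∩ Icc x b) :=
    ⟨x, fun t ht => ht.2.1⟩
  have hclosed : IsClosed (contact a b f ∩ Icc x b) :=
    (isClosed_contact hab hf).inter isClosed_Icc
  have hmem := hclosed.csInf_mem hnonempty hbdd
  refine ⟨hmem.1, hmem.2.2, lt_of_le_of_ne hmem.2.1 ?_⟩
  intro h
  exact hne' (h ▸ hmem.1)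

lemma lEnd_le' {x t : ℝ} {f : ℝ → ℝ} (ht : t ∈ contact a b f) (hta : a ≤ t) (htx : t ≤ x) :
    t ≤ lEnd a b f x :=
  le_csSup ⟨x, fun s hs => hs.2.2⟩ ⟨ht, hta, htx⟩

lemma le_rEnd' {x t : ℝ} {f : ℝ → ℝ} (ht : t ∈ contact a b f) (htx : x ≤ t) (htb : t ≤ b) :
    rEnd a b f x ≤ t :=
  csInf_le ⟨x, fun s hs => hs.2.1⟩ ⟨ht, htx, htb⟩

/-- contact at the endpoints of an optimal representation -/
lemma contact_of_opt (hab : a < b) {f : ℝ → ℝ} (hf : ContinuousOn f (Icc a b))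
    {x lam x₀ x₁ : ℝ} (hx : x ∈ Icc a b) (hlam : lam ∈ Ioo (0:ℝ) 1)
    (hx₀ : x₀ ∈ Icc a b) (hx₁ : x₁ ∈ Icc a b)
    (hsum : (1 - lam) * x₀ + lam * x₁ = x)
    (hopt : (1 - lam) * f x₀ + lam * f x₁ = convEnv a b f x) :
    convEnv a b f x₀ = f x₀ ∧ convEnv a b f x₁ = f x₁ := by
  have hconv := convexOn_convEnv hab hf
  have hcvx := hconv.2 hx₀ hx₁ (by linarith [hlam.2] : (0:ℝ) ≤ 1 - lam)
    hlam.1.le (by ring : (1 - lam) + lam = 1)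
  simp only [smul_eq_mul] at hcvx
  rw [hsum] at hcvx
  have hle₀ : convEnv a b f x₀ ≤ f x₀ := convEnv_le_self hf hx₀
  have hle₁ : convEnv a b f x₁ ≤ f x₁ := convEnv_le_self hf hx₁
  constructor
  · by_contra h
    have h' : convEnv a b f x₀ < f x₀ := lt_of_le_of_ne hle₀ h
    nlinarith [hlam.1, hlam.2]
  · by_contra h
    have h' : convEnv a b f x₁ < f x₁ := lt_of_le_of_ne hle₁ h
    nlinarith [hlam.1, hlam.2]

/-- the envelope is affine on the interval of an optimal representation -/
lemma affine_of_opt (hab : a < b) {f : ℝ → ℝ} (hf : ContinuousOn f (Icc a b))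
    {x lam x₀ x₁ : ℝ} (hx : x ∈ Icc a b) (hlam : lam ∈ Ioo (0:ℝ) 1)
    (hx₀ : x₀ ∈ Icc a b) (hx₁ : x₁ ∈ Icc a b) (hlt : x₀ < x₁)
    (hsum : (1 - lam) * x₀ + lam * x₁ = x)
    (hopt : (1 - lam) * f x₀ + lam * f x₁ = convEnv a b f x) :
    ∀ t ∈ Ioo x₀ x₁,
      convEnv a b f t = f x₀ + ((f x₁ - f x₀) / (x₁ - x₀)) * (t - x₀) := by
  set k := (f x₁ - f x₀) / (x₁ - x₀) with hkdef
  have hd : (0:ℝ) < x₁ - x₀ := by linarith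
  have hkv : k * (x₁ - x₀) = f x₁ - f x₀ := by rw [hkdef]; field_simp
  have hxm : x - x₀ = lam * (x₁ - x₀) := by linarith [hsum]
  have hx₀x : x₀ < x := by nlinarith [hlam.1, hlam.2]
  have hxx₁ : x < x₁ := by nlinarith [hlam.1, hlam.2]
  have hEx : convEnv a b f x = f x₀ + k * (x - x₀) := by
    rw [← hopt]
    linear_combination (-lam) * hkv - k * hxm
  obtain ⟨hc₀, hc₁⟩ := contact_of_opt hab hf hx hlam hx₀ hx₁ hsum hopt
  have hconv := convexOn_convEnv hab hf
  intro t ht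
  have ht' : t ∈ Icc a b := ⟨le_trans hx₀.1 ht.1.le, le_trans ht.2.le hx₁.2⟩
  -- upper bound via the chord
  have hup : convEnv a b f t ≤ f x₀ + k * (t - x₀) := by
    set mu := (t - x₀) / (x₁ - x₀) with hmu
    have hmu0 : 0 ≤ mu := div_nonneg (by linarith [ht.1]) hd.le
    have hmu1 : mu ≤ 1 := by rw [div_le_one hd]; linarith [ht.2]
    have hmusum : (1 - mu) * x₀ + mu * x₁ = t := by rw [hmu]; field_simp [hd.ne']; ring
    have := convEnv_le_pval hf ht' (p := (mu, x₀, x₁)) ⟨⟨hmu0, hmu1⟩, hx₀, hx₁, hmusum⟩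
    simp only [pval] at this
    have hmuv : mu * (x₁ - x₀) = t - x₀ := by rw [hmu]; field_simp
    calc convEnv a b f t ≤ (1 - mu) * f x₀ + mu * f x₁ := this
      _ = f x₀ + k * (t - x₀) := by linear_combination (-mu) * hkv + k * hmuv
  -- lower bound via convexity
  rcases le_or_gt t x with htx | htx
  · rcases eq_or_lt_of_le htx with rfl | htx'
    · rw [hEx]
    · set mu := (x - t) / (x₁ - t) with hmu
      have hdt : (0:ℝ) < x₁ - t := by linarith [ht.2]
      have hmu0 : 0 ≤ mu := div_nonneg (by linarith) hdt.le
      have hmu1 : mu < 1 := by rw [div_lt_one hdt]; linarith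
      have hmusum : (1 - mu) * t + mu * x₁ = x := by rw [hmu]; field_simp [hdt.ne']; ring
      have hcvx := hconv.2 ht' hx₁ (by linarith : (0:ℝ) ≤ 1 - mu) hmu0
        (by ring : (1 - mu) + mu = 1)
      simp only [smul_eq_mul] at hcvx
      rw [hmusum] at hcvx
      rw [hc₁] at hcvx
      -- E x - mu * f x₁ = (1-mu) * (f x₀ + k * (t - x₀))
      have hkey : convEnv a b f x - mu * f x₁ = (1 - mu) * (f x₀ + k * (t - x₀)) := by
        rw [hEx]
        linear_combination mu * hkv - k * hmusum
      have hlow' : (1 - mu) * (f x₀ + k * (t - x₀)) ≤ (1 - mu) * convEnv a b f t := by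
        linarith
      have := le_of_mul_le_mul_left (by linarith [hlow'] :
        (1 - mu) * (f x₀ + k * (t - x₀)) ≤ (1 - mu) * convEnv a b f t) (by linarith : (0:ℝ) < 1 - mu)
      linarith [hup]
  · set nu := (x - x₀) / (t - x₀) with hnu
    have hdt : (0:ℝ) < t - x₀ := by linarith [ht.1]
    have hnu0 : 0 < nu := div_pos (by linarith) hdt
    have hnu1 : nu < 1 := by rw [div_lt_one hdt]; linarith
    have hnusum : (1 - nu) * x₀ + nu * t = x := by rw [hnu]; field_simp [hdt.ne']; ring
    have hcvx := hconv.2 hx₀ ht' (by linarith : (0:ℝ) ≤ 1 - nu) hnu0.le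
      (by ring : (1 - nu) + nu = 1)
    simp only [smul_eq_mul] at hcvx
    rw [hnusum] at hcvx
    rw [hc₀] at hcvx
    have hkey : convEnv a b f x - (1 - nu) * f x₀ = nu * (f x₀ + k * (t - x₀)) := by
      rw [hEx]
      linear_combination (-k) * hnusum
    have := le_of_mul_le_mul_left (by linarith :
      nu * (f x₀ + k * (t - x₀)) ≤ nu * convEnv a b f t) hnu0
    linarith [hup]

/-- under NoFlat: the envelope is strictly below `f` inside an optimal interval -/
lemma lt_on_opt_interval (hab : a < b) {f : ℝ → ℝ} (hf : ContinuousOn f (Icc a b))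
    (hnf : NoFlat a b f)
    {x lam x₀ x₁ : ℝ} (hx : x ∈ Icc a b) (hlam : lam ∈ Ioo (0:ℝ) 1)
    (hx₀ : x₀ ∈ Icc a b) (hx₁ : x₁ ∈ Icc a b) (hlt : x₀ < x₁)
    (hsum : (1 - lam) * x₀ + lam * x₁ = x)
    (hopt : (1 - lam) * f x₀ + lam * f x₁ = convEnv a b f x) :
    ∀ t ∈ Ioo x₀ x₁, convEnv a b f t < f t := by
  have haff := affine_of_opt hab hf hx hlam hx₀ hx₁ hlt hsum hopt
  apply hnf x₀ x₁ hx₀.1 hlt hx₁.2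
  refine ⟨(f x₁ - f x₀) / (x₁ - x₀),
    f x₀ - ((f x₁ - f x₀) / (x₁ - x₀)) * x₀, fun t ht => ?_⟩
  rw [haff t ht]; ring


lemma opt_nondeg {f : ℝ → ℝ}
    {x lam x₀ x₁ : ℝ} (h0 : 0 ≤ lam) (h1 : lam ≤ 1)
    (hsum : (1 - lam) * x₀ + lam * x₁ = x)
    (hopt : (1 - lam) * f x₀ + lam * f x₁ = convEnv a b f x)
    (hltx : convEnv a b f x < f x) :
    0 < lam ∧ lam < 1 ∧ x₀ ≠ x₁ := by
  have hlam0 : 0 < lam := by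
    rcases eq_or_lt_of_le h0 with h | h
    · exfalso
      have hx₀ : x₀ = x := by rw [← h] at hsum; linarith
      rw [← h, hx₀] at hopt
      simp at hopt
      linarith
    · exact h
  have hlam1 : lam < 1 := by
    rcases eq_or_lt_of_le h1 with h | h
    · exfalso
      have hx₁ : x₁ = x := by rw [h] at hsum; linarith
      rw [h, hx₁] at hopt
      simp at hopt
      linarith
    · exact h
  refine ⟨hlam0, hlam1, fun h => ?_⟩
  rw [h] at hsum hopt
  have hx₁ : x₁ = x := by linarith
  rw [hx₁] at hopt
  have : f x = convEnv a b f x := by linarith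
  linarith

/-- value of any perturbation at an optimal representation: contact case -/
lemma pval_opt_contact (hab : a < b) {f : ℝ → ℝ} (hf : ContinuousOn f (Icc a b))
    (hnf : NoFlat a b f)
    {x lam x₀ x₁ : ℝ} (hx : x ∈ Icc a b) (h0 : 0 ≤ lam) (h1 : lam ≤ 1)
    (hx₀ : x₀ ∈ Icc a b) (hx₁ : x₁ ∈ Icc a b)
    (hsum : (1 - lam) * x₀ + lam * x₁ = x)
    (hopt : (1 - lam) * f x₀ + lam * f x₁ = convEnv a b f x)
    (hfx : convEnv a b f x = f x) (g : ℝ → ℝ) :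
    (1 - lam) * g x₀ + lam * g x₁ = g x := by
  rcases eq_or_lt_of_le h0 with h | hl0
  · have hx₀x : x₀ = x := by rw [← h] at hsum; linarith
    rw [← h, hx₀x]; ring
  rcases eq_or_lt_of_le h1 with h | hl1
  · have hx₁x : x₁ = x := by rw [h] at hsum; linarith
    rw [h, hx₁x]; ring
  by_cases hx01 : x₀ = x₁
  · have hx₁x : x₁ = x := by rw [hx01] at hsum; linarith
    have hx₀x : x₀ = x := by rw [hx01, hx₁x]
    rw [hx₀x, hx₁x]; ring
  exfalso
  rcases Ne.lt_or_gt hx01 with hlt' | hlt'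
  · have hxI : x ∈ Ioo x₀ x₁ := by constructor <;> nlinarith
    have := lt_on_opt_interval hab hf hnf hx ⟨hl0, hl1⟩ hx₀ hx₁ hlt' hsum hopt x hxI
    linarith
  · have hsum2 : (1 - (1 - lam)) * x₁ + (1 - lam) * x₀ = x := by linarith
    have hopt2 : (1 - (1 - lam)) * f x₁ + (1 - lam) * f x₀ = convEnv a b f x := by linarith
    have hxI : x ∈ Ioo x₁ x₀ := by constructor <;> nlinarith
    have := lt_on_opt_interval hab hf hnf hx (lam := 1 - lam) ⟨by linarith, by linarith⟩
      hx₁ hx₀ hlt' hsum2 hopt2 x hxI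
    linarith

lemma opt_core (hab : a < b) {f : ℝ → ℝ} (hf : ContinuousOn f (Icc a b))
    (hnf : NoFlat a b f)
    {x lam x₀ x₁ : ℝ} (hx : x ∈ Icc a b) (hlam : lam ∈ Ioo (0:ℝ) 1)
    (hx₀ : x₀ ∈ Icc a b) (hx₁ : x₁ ∈ Icc a b) (hlt' : x₀ < x₁)
    (hsum : (1 - lam) * x₀ + lam * x₁ = x)
    (hopt : (1 - lam) * f x₀ + lam * f x₁ = convEnv a b f x)
    (hltx : convEnv a b f x < f x) :
    x₀ = lEnd a b f x ∧ x₁ = rEnd a b f x := by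
  obtain ⟨hc₀, hc₁⟩ := contact_of_opt hab hf hx hlam hx₀ hx₁ hsum hopt
  have hxI : x ∈ Ioo x₀ x₁ := by
    constructor <;> nlinarith [hlam.1, hlam.2]
  have hltint := lt_on_opt_interval hab hf hnf hx hlam hx₀ hx₁ hlt' hsum hopt
  have hne : convEnv a b f x ≠ f x := ne_of_lt hltx
  obtain ⟨hcl, hal, hlx⟩ := lEnd_spec hab hf hx hne
  obtain ⟨hcr, hrb, hxr⟩ := rEnd_spec hab hf hx hne
  constructor
  · have h₀le : x₀ ≤ lEnd a b f x := lEnd_le' ⟨hx₀, hc₀⟩ hx₀.1 hxI.1.le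
    rcases eq_or_lt_of_le h₀le with h | h
    · exact h
    · exfalso
      have : lEnd a b f x ∈ Ioo x₀ x₁ := ⟨h, lt_trans hlx hxI.2⟩
      have := hltint _ this
      exact absurd hcl.2 (ne_of_lt this)
  · have h₁ge : rEnd a b f x ≤ x₁ := le_rEnd' ⟨hx₁, hc₁⟩ hxI.2.le hx₁.2
    rcases eq_or_lt_of_le h₁ge with h | h
    · exact h.symm
    · exfalso
      have : rEnd a b f x ∈ Ioo x₀ x₁ := ⟨lt_trans hxI.1 hxr, h⟩
      have := hltint _ this
      exact absurd hcr.2 (ne_of_lt this)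

/-- value of any perturbation at an optimal representation: non-contact case -/
lemma pval_opt_noncontact (hab : a < b) {f : ℝ → ℝ} (hf : ContinuousOn f (Icc a b))
    (hnf : NoFlat a b f)
    {x lam x₀ x₁ : ℝ} (hx : x ∈ Icc a b) (h0 : 0 ≤ lam) (h1 : lam ≤ 1)
    (hx₀ : x₀ ∈ Icc a b) (hx₁ : x₁ ∈ Icc a b)
    (hsum : (1 - lam) * x₀ + lam * x₁ = x)
    (hopt : (1 - lam) * f x₀ + lam * f x₁ = convEnv a b f x)
    (hltx : convEnv a b f x < f x) (g : ℝ → ℝ) :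
    (1 - lam) * g x₀ + lam * g x₁ =
      g (lEnd a b f x) + ((g (rEnd a b f x) - g (lEnd a b f x)) /
        (rEnd a b f x - lEnd a b f x)) * (x - lEnd a b f x) := by
  obtain ⟨hl0, hl1, hne01⟩ := opt_nondeg h0 h1 hsum hopt hltx
  have hne : convEnv a b f x ≠ f x := ne_of_lt hltx
  obtain ⟨hcl, hal, hlx⟩ := lEnd_spec hab hf hx hne
  obtain ⟨hcr, hrb, hxr⟩ := rEnd_spec hab hf hx hne
  set c := lEnd a b f x
  set d := rEnd a b f x
  have hcd : c < d := lt_trans hlx hxr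
  have hdc : (0:ℝ) < d - c := by linarith
  rcases Ne.lt_or_gt hne01 with hlt' | hlt'
  · obtain ⟨he₀, he₁⟩ := opt_core hab hf hnf hx ⟨hl0, hl1⟩ hx₀ hx₁ hlt' hsum hopt hltx
    rw [he₀, he₁] at hsum ⊢
    have hlamv : lam * (d - c) = x - c := by linarith
    have hdiv : ((g d - g c) / (d - c)) * (x - c) = lam * (g d - g c) := by
      rw [← hlamv]
      field_simp
    rw [hdiv]; ring
  · have hsum2 : (1 - (1 - lam)) * x₁ + (1 - lam) * x₀ = x := by linarith
    have hopt2 : (1 - (1 - lam)) * f x₁ + (1 - lam) * f x₀ = convEnv a b f x := by linarith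
    obtain ⟨he₁, he₀⟩ := opt_core hab hf hnf hx (lam := 1 - lam) ⟨by linarith, by linarith⟩
      hx₁ hx₀ hlt' hsum2 hopt2 hltx
    rw [he₀, he₁] at hsum ⊢
    have hlamv : (1 - lam) * (d - c) = x - c := by linarith
    have hdiv : ((g d - g c) / (d - c)) * (x - c) = (1 - lam) * (g d - g c) := by
      rw [← hlamv]
      field_simp
    rw [hdiv]; ring


lemma abs_pval_le {g : ℝ → ℝ} {C x : ℝ} (hC : ∀ t ∈ Icc a b, |g t| ≤ C)
    {p : ℝ × ℝ × ℝ} (hp : p ∈ reps a b x) : |pval g p| ≤ C := by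
  obtain ⟨lam, x₀, x₁⟩ := p
  obtain ⟨⟨h0, h1⟩, h2, h3, _⟩ := hp
  have h0' : (0:ℝ) ≤ lam := h0
  have h1' : lam ≤ 1 := h1
  have e0 := abs_le.1 (hC _ h2)
  have e1 := abs_le.1 (hC _ h3)
  simp only [pval]
  rw [abs_le]
  constructor <;> nlinarith

open Classical in
/-- the limit function `G` -/
noncomputable def Gfun (a b : ℝ) (f g : ℝ → ℝ) : ℝ → ℝ := fun x =>
  if convEnv a b f x = f x then g x
  else g (lEnd a b f x) + ((g (rEnd a b f x) - g (lEnd a b f x)) /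
    (rEnd a b f x - lEnd a b f x)) * (x - lEnd a b f x)

/-- value of any perturbation at an optimal representation -/
lemma pval_opt (hab : a < b) {f : ℝ → ℝ} (hf : ContinuousOn f (Icc a b))
    (hnf : NoFlat a b f) {x : ℝ} (hx : x ∈ Icc a b) {p : ℝ × ℝ × ℝ}
    (hp : p ∈ reps a b x) (hopt : pval f p = convEnv a b f x) (g : ℝ → ℝ) :
    pval g p = Gfun a b f g x := by
  obtain ⟨lam, x₀, x₁⟩ := p
  obtain ⟨⟨h0, h1⟩, h2, h3, h4⟩ := hp
  have h0' : (0:ℝ) ≤ lam := h0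
  have h1' : lam ≤ 1 := h1
  have h4' : (1 - lam) * x₀ + lam * x₁ = x := h4
  have hopt' : (1 - lam) * f x₀ + lam * f x₁ = convEnv a b f x := hopt
  by_cases hfx : convEnv a b f x = f x
  · rw [Gfun, if_pos hfx]
    exact pval_opt_contact hab hf hnf hx h0' h1' h2 h3 h4' hopt' hfx g
  · rw [Gfun, if_neg hfx]
    exact pval_opt_noncontact hab hf hnf hx h0' h1' h2 h3 h4' hopt'
      (lt_of_le_of_ne (convEnv_le_self hf hx) hfx) g

/-- pointwise convergence of difference quotients -/
lemma tendsto_quot (hab : a < b) {f g : ℝ → ℝ} (hf : ContinuousOn f (Icc a b))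
    (hg : ContinuousOn g (Icc a b)) (hnf : NoFlat a b f) {C : ℝ}
    (hC : ∀ t ∈ Icc a b, |g t| ≤ C) {x : ℝ} (hx : x ∈ Icc a b) :
    Tendsto (fun s => (convEnv a b (fun t => f t + s * g t) x - convEnv a b f x) / s)
      (𝓝[≠] (0:ℝ)) (𝓝 (Gfun a b f g x)) := by
  have hfs : ∀ s : ℝ, ContinuousOn (fun t => f t + s * g t) (Icc a b) :=
    fun s => hf.add (continuousOn_const.mul hg)
  set Gv := Gfun a b f g x with hGv
  set E₀ := convEnv a b f x with hE₀
  -- choose optimal representations for every s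
  have hex : ∀ s : ℝ, ∃ p ∈ reps a b x,
      pval (fun t => f t + s * g t) p = convEnv a b (fun t => f t + s * g t) x ∧
      ∀ q ∈ reps a b x, pval (fun t => f t + s * g t) p ≤ pval (fun t => f t + s * g t) q :=
    fun s => exists_min (hfs s) hx
  choose P hPmem hPval _ using hex
  -- the split of pval of the perturbed function
  have hsplit : ∀ (s : ℝ) (p : ℝ × ℝ × ℝ),
      pval (fun t => f t + s * g t) p = pval f p + s * pval g p := by
    intro s p; simp only [pval]; ring
  -- the upper estimate valid for all s
  obtain ⟨p₀, hp₀mem, hp₀val, _⟩ := exists_min hf hx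
  have hp₀g : pval g p₀ = Gv := pval_opt hab hf hnf hx hp₀mem hp₀val g
  have hupper : ∀ s : ℝ, convEnv a b (fun t => f t + s * g t) x ≤ E₀ + s * Gv := by
    intro s
    have h1 := convEnv_le_pval (hfs s) hx hp₀mem
    rw [hsplit s p₀, hp₀val, hp₀g] at h1
    exact h1
  have hEleP : ∀ s : ℝ, E₀ ≤ pval f (P s) := fun s => convEnv_le_pval hf hx (hPmem s)
  have habsg : ∀ s : ℝ, |pval g (P s)| ≤ C := fun s => abs_pval_le hC (hPmem s)
  have hΔle : ∀ s : ℝ, pval f (P s) - E₀ ≤ |s| * (|Gv| + C) := by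
    intro s
    have h1 : pval f (P s) + s * pval g (P s) ≤ E₀ + s * Gv := by
      rw [← hsplit s (P s), hPval s]
      exact hupper s
    have h2 : pval f (P s) - E₀ ≤ s * (Gv - pval g (P s)) := by linarith
    calc pval f (P s) - E₀ ≤ s * (Gv - pval g (P s)) := h2
      _ ≤ |s * (Gv - pval g (P s))| := le_abs_self _
      _ = |s| * |Gv - pval g (P s)| := abs_mul _ _
      _ ≤ |s| * (|Gv| + C) := by
          apply mul_le_mul_of_nonneg_left _ (abs_nonneg s)
          calc |Gv - pval g (P s)| ≤ |Gv| + |pval g (P s)| := abs_sub _ _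
            _ ≤ |Gv| + C := by linarith [habsg s]
  -- reduce to sequences
  rw [tendsto_iff_seq_tendsto]
  intro u hu
  apply tendsto_of_subseq_tendsto
  intro ns hns
  have hv : Tendsto (fun n => u (ns n)) atTop (𝓝[≠] (0:ℝ)) := hu.comp hns
  obtain ⟨pbar, hpbar, ms, hms, hplim⟩ :=
    (isCompact_reps (a := a) (b := b) x).tendsto_subseq
      (x := fun n => P (u (ns n))) (fun n => hPmem _)
  refine ⟨ms, ?_⟩
  set w : ℕ → ℝ := fun i => u (ns (ms i)) with hw
  have hwt : Tendsto w atTop (𝓝[≠] (0:ℝ)) := hv.comp hms.tendsto_atTop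
  have hw0 : Tendsto w atTop (𝓝 (0:ℝ)) := hwt.mono_right nhdsWithin_le_nhds
  have hwne : ∀ᶠ i in atTop, w i ≠ 0 := hwt self_mem_nhdsWithin
  have hPlim : Tendsto (fun i => P (w i)) atTop (𝓝 pbar) := hplim
  have hPin : ∀ᶠ i in atTop, P (w i) ∈ reps a b x :=
    Filter.Eventually.of_forall (fun i => hPmem _)
  have hPlim' : Tendsto (fun i => P (w i)) atTop (𝓝[reps a b x] pbar) :=
    tendsto_nhdsWithin_of_tendsto_nhds_of_eventually_within _ hPlim hPin
  have hvf : Tendsto (fun i => pval f (P (w i))) atTop (𝓝 (pval f pbar)) :=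
    (continuousOn_pval hf x pbar hpbar).tendsto.comp hPlim'
  have hvg : Tendsto (fun i => pval g (P (w i))) atTop (𝓝 (pval g pbar)) :=
    (continuousOn_pval hg x pbar hpbar).tendsto.comp hPlim'
  -- Δ tends to zero
  have hΔlim : Tendsto (fun i => pval f (P (w i)) - E₀) atTop (𝓝 0) := by
    apply squeeze_zero (fun i => by linarith [hEleP (w i)]) (fun i => hΔle (w i))
    have : Tendsto (fun i => |w i| * (|Gv| + C)) atTop (𝓝 (|(0:ℝ)| * (|Gv| + C))) :=
      (hw0.abs).mul_const _
    simpa using this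
  have hpbar_opt : pval f pbar = E₀ := by
    have h2 : Tendsto (fun i => (pval f (P (w i)) - E₀) + E₀) atTop (𝓝 (0 + E₀)) :=
      hΔlim.add_const E₀
    simp only [sub_add_cancel, zero_add] at h2
    exact tendsto_nhds_unique hvf h2
  have hβ : pval g pbar = Gv := pval_opt hab hf hnf hx hpbar hpbar_opt g
  -- squeeze
  have hq : ∀ᶠ i in atTop,
      |(convEnv a b (fun t => f t + w i * g t) x - E₀) / w i - Gv|
        ≤ |pval g (P (w i)) - Gv| := by
    filter_upwards [hwne] with i hne
    set s := w i with hs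
    set β := pval g (P s) with hβ'
    have hEs : convEnv a b (fun t => f t + s * g t) x = pval f (P s) + s * β := by
      rw [← hsplit s (P s), hPval s]
    have hΔ0 : 0 ≤ pval f (P s) - E₀ := by linarith [hEleP s]
    have hqeq : (convEnv a b (fun t => f t + s * g t) x - E₀) / s
        = β + (pval f (P s) - E₀) / s := by
      rw [hEs]
      field_simp
      ring
    have hup := hupper s
    rcases lt_or_gt_of_ne hne with hneg | hpos
    · -- s < 0
      have h1 : (pval f (P s) - E₀) / s ≤ 0 := div_nonpos_of_nonneg_of_nonpos hΔ0 hneg.le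
      have h2 : Gv ≤ (convEnv a b (fun t => f t + s * g t) x - E₀) / s := by
        rw [le_div_iff_of_neg hneg]
        linarith
      rw [hqeq] at h2 ⊢
      have h3 : β + (pval f (P s) - E₀) / s ≤ β := by linarith
      rw [abs_of_nonneg (by linarith)]
      have := le_abs_self (β - Gv)
      linarith
    · -- s > 0
      have h1 : 0 ≤ (pval f (P s) - E₀) / s := div_nonneg hΔ0 hpos.le
      have h2 : (convEnv a b (fun t => f t + s * g t) x - E₀) / s ≤ Gv := by
        rw [div_le_iff₀ hpos]
        linarith
      rw [hqeq] at h2 ⊢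
      have h3 : β ≤ β + (pval f (P s) - E₀) / s := by linarith
      rw [abs_of_nonpos (by linarith)]
      have := le_abs_self (Gv - β)
      rw [abs_sub_comm β Gv]
      linarith
  have hβlim : Tendsto (fun i => |pval g (P (w i)) - Gv|) atTop (𝓝 0) := by
    have h1 : Tendsto (fun i => pval g (P (w i)) - Gv) atTop (𝓝 (pval g pbar - Gv)) :=
      hvg.sub_const Gv
    rw [hβ, sub_self] at h1
    simpa using h1.abs
  have habs0 : Tendsto (fun i =>
      |(convEnv a b (fun t => f t + w i * g t) x - E₀) / w i - Gv|) atTop (𝓝 0) :=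
    squeeze_zero' (Filter.Eventually.of_forall (fun i => abs_nonneg _)) hq hβlim
  have final : Tendsto (fun i =>
      (convEnv a b (fun t => f t + w i * g t) x - E₀) / w i) atTop (𝓝 Gv) := by
    rw [tendsto_iff_dist_tendsto_zero]
    simpa [Real.dist_eq] using habs0
  exact final


/-- mean value theorem helper -/
lemma mvt_step {Λ : ℝ → ℝ} (hΛ : ContDiff ℝ 1 Λ) (y h' : ℝ) (hne : h' ≠ 0) :
    ∃ c, |c - y| ≤ |h'| ∧ Λ (y + h') - Λ y = h' * deriv Λ c := by
  have hdiff : ∀ z : ℝ, HasDerivAt Λ (deriv Λ z) z := fun z =>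
    ((hΛ.differentiable one_ne_zero) z).hasDerivAt
  rcases hne.lt_or_gt with hneg | hpos
  · obtain ⟨c, hcI, hceq⟩ := exists_hasDerivAt_eq_slope Λ (deriv Λ)
      (by linarith : y + h' < y) (hΛ.continuous.continuousOn)
      (fun z _ => hdiff z)
    have hd : y - (y + h') = -h' := by ring
    rw [hd] at hceq
    refine ⟨c, ?_, ?_⟩
    · rw [abs_of_neg hneg, abs_of_nonpos (by linarith [hcI.2] : c - y ≤ 0)]
      linarith [hcI.1]
    · rw [eq_div_iff (by simpa using hne : -h' ≠ 0)] at hceq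
      linarith [hceq]
  · obtain ⟨c, hcI, hceq⟩ := exists_hasDerivAt_eq_slope Λ (deriv Λ)
      (by linarith : y < y + h') (hΛ.continuous.continuousOn)
      (fun z _ => hdiff z)
    have hd : y + h' - y = h' := by ring
    rw [hd] at hceq
    refine ⟨c, ?_, ?_⟩
    · rw [abs_of_pos hpos, abs_of_nonneg (by linarith [hcI.1] : 0 ≤ c - y)]
      linarith [hcI.2]
    · rw [eq_div_iff hne] at hceq
      linarith [hceq]

/-- uniform first order Taylor estimate for `Λ (u t + s φ t)` -/
lemma taylor_bound (hab : a < b) {u Λ φ : ℝ → ℝ} (hu : ContinuousOn u (Icc a b))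
    (hΛ : ContDiff ℝ 1 Λ) {M : ℝ} (hM : ∀ t, |φ t| ≤ M)
    {ε : ℝ} (hε : 0 < ε) : ∃ δ > 0, ∀ s : ℝ, |s| ≤ δ → ∀ t ∈ Icc a b,
      |Λ (u t + s * φ t) - Λ (u t) - s * (φ t * deriv Λ (u t))| ≤ ε * |s| := by
  have hM0 : 0 ≤ M := le_trans (abs_nonneg _) (hM a)
  have hane : (Icc a b).Nonempty := ⟨a, left_mem_Icc.2 hab.le⟩
  obtain ⟨t₁, ht₁, hmin⟩ := isCompact_Icc.exists_isMinOn hane hu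
  obtain ⟨t₂, ht₂, hmax⟩ := isCompact_Icc.exists_isMaxOn hane hu
  set K := Icc (u t₁ - (M + 1)) (u t₂ + (M + 1)) with hK
  have hΛ' : Continuous (deriv Λ) := hΛ.continuous_deriv le_rfl
  have huc := isCompact_Icc.uniformContinuousOn_of_continuous
    (hΛ'.continuousOn : ContinuousOn (deriv Λ) K)
  rw [Metric.uniformContinuousOn_iff] at huc
  obtain ⟨δ', hδ', hδ''⟩ := huc (ε / (M + 1)) (by positivity)
  refine ⟨min 1 (δ' / (M + 2)), lt_min one_pos (by positivity), fun s hs t ht => ?_⟩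
  have hsle1 : |s| ≤ 1 := le_trans hs (min_le_left _ _)
  have hsle2 : |s| ≤ δ' / (M + 2) := le_trans hs (min_le_right _ _)
  have hut : u t ∈ Icc (u t₁) (u t₂) := ⟨hmin ht, hmax ht⟩
  have hhle : |s * φ t| ≤ |s| * M := by
    rw [abs_mul]
    exact mul_le_mul_of_nonneg_left (hM t) (abs_nonneg s)
  by_cases hzero : s * φ t = 0
  · rw [hzero, add_zero]
    have : s * (φ t * deriv Λ (u t)) = (s * φ t) * deriv Λ (u t) := by ring
    rw [this, hzero]
    have hnn : (0:ℝ) ≤ ε * |s| := by positivity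
    simpa using hnn
  · obtain ⟨c, hcd, hceq⟩ := mvt_step hΛ (u t) (s * φ t) hzero
    have hcK : c ∈ K := by
      constructor
      · have : -(|s| * M) ≤ c - u t := by
          calc -(|s| * M) ≤ -|c - u t| := by linarith [le_trans hcd hhle]
            _ ≤ c - u t := neg_abs_le _
        have : -(M) ≤ c - u t := by nlinarith [abs_nonneg s]
        linarith [hut.1]
      · have : c - u t ≤ |s| * M := le_trans (le_abs_self _) (le_trans hcd hhle)
        have : c - u t ≤ M := by nlinarith [abs_nonneg s]
        linarith [hut.2]
    have hutK : u t ∈ K := ⟨by linarith [hut.1], by linarith [hut.2]⟩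
    have hdist : dist c (u t) < δ' := by
      rw [Real.dist_eq]
      have h1 : |c - u t| ≤ |s| * M := le_trans hcd hhle
      have h2 : |s| * M ≤ (δ' / (M + 2)) * M := mul_le_mul_of_nonneg_right hsle2 hM0
      have h3 : (δ' / (M + 2)) * M < δ' := by
        rw [div_mul_eq_mul_div, div_lt_iff₀ (by positivity)]
        nlinarith
      linarith
    have hΛdist := hδ'' c hcK (u t) hutK hdist
    rw [Real.dist_eq] at hΛdist
    have hexpand : Λ (u t + s * φ t) - Λ (u t) - s * (φ t * deriv Λ (u t))
        = (s * φ t) * (deriv Λ c - deriv Λ (u t)) := by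
      rw [show s * (φ t * deriv Λ (u t)) = (s * φ t) * deriv Λ (u t) by ring]
      linarith [hceq]
    rw [hexpand, abs_mul]
    calc |s * φ t| * |deriv Λ c - deriv Λ (u t)|
        ≤ (|s| * M) * (ε / (M + 1)) := by
          apply mul_le_mul hhle hΛdist.le (abs_nonneg _)
          positivity
      _ ≤ ε * |s| := by
          have h1 : M / (M+1) ≤ 1 := by
            rw [div_le_one (by positivity)]; linarith
          have h2 := mul_le_mul_of_nonneg_left h1 (mul_nonneg hε.le (abs_nonneg s))
          calc (|s| * M) * (ε/(M+1)) = (ε * |s|) * (M/(M+1)) := by ring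
            _ ≤ (ε * |s|) * 1 := h2
            _ = ε * |s| := mul_one _

/-- full pointwise convergence for a nonlinearly perturbed family -/
lemma tendsto_quot_full (hab : a < b) {f g : ℝ → ℝ} (hf : ContinuousOn f (Icc a b))
    (hg : ContinuousOn g (Icc a b)) (hnf : NoFlat a b f) {C : ℝ}
    (hC : ∀ t ∈ Icc a b, |g t| ≤ C)
    {fs : ℝ → ℝ → ℝ} (hfsc : ∀ s, ContinuousOn (fs s) (Icc a b))
    (htay : ∀ ε > (0:ℝ), ∃ δ > (0:ℝ), ∀ s : ℝ, |s| ≤ δ → ∀ t ∈ Icc a b,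
      |fs s t - f t - s * g t| ≤ ε * |s|)
    {x : ℝ} (hx : x ∈ Icc a b) :
    Tendsto (fun s => (convEnv a b (fs s) x - convEnv a b f x) / s)
      (𝓝[≠] (0:ℝ)) (𝓝 (Gfun a b f g x)) := by
  have hlin := tendsto_quot hab hf hg hnf hC hx
  have hdiff : Tendsto (fun s =>
      (convEnv a b (fs s) x - convEnv a b (fun t => f t + s * g t) x) / s)
      (𝓝[≠] (0:ℝ)) (𝓝 0) := by
    rw [NormedAddCommGroup.tendsto_nhds_zero]
    intro ε hε
    obtain ⟨δ, hδ, hδ'⟩ := htay (ε/2) (by linarith)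
    have h1 : ∀ᶠ (s : ℝ) in 𝓝 0, |s| < δ := by
      have habs : Tendsto (fun s : ℝ => |s|) (𝓝 0) (𝓝 0) := by
        simpa using continuous_abs.tendsto (0:ℝ)
      exact habs.eventually_lt_const hδ
    filter_upwards [h1.filter_mono nhdsWithin_le_nhds, self_mem_nhdsWithin] with s hsδ hsne
    have hsne' : s ≠ 0 := hsne
    have hbound : ∀ t ∈ Icc a b, |fs s t - (f t + s * g t)| ≤ ε/2 * |s| := by
      intro t ht
      have := hδ' s hsδ.le t ht
      rw [show fs s t - (f t + s * g t) = fs s t - f t - s * g t by ring]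
      exact this
    have hE := convEnv_diff_le (hfsc s)
      (hf.add (continuousOn_const.mul hg)) hbound hx
    rw [Real.norm_eq_abs, abs_div]
    rw [div_lt_iff₀ (abs_pos.2 hsne')]
    calc |convEnv a b (fs s) x - convEnv a b (fun t => f t + s * g t) x|
        ≤ ε/2 * |s| := hE
      _ < ε * |s| := by
          have : 0 < |s| := abs_pos.2 hsne'
          nlinarith
  have hsum := hlin.add hdiff
  rw [add_zero] at hsum
  have hfun : (fun s => (convEnv a b (fun t => f t + s * g t) x - convEnv a b f x) / s
      + (convEnv a b (fs s) x - convEnv a b (fun t => f t + s * g t) x) / s)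
      = fun s => (convEnv a b (fs s) x - convEnv a b f x) / s := by
    funext s
    rw [← add_div]
    congr 1; ring
  rw [hfun] at hsum
  exact hsum

end CEaux

/-- Gateaux derivative of `v ↦ ∫_a^b [Λ(v)]**` at `u` in direction `φ`, under
condition (noflat) for `f = Λ ∘ u`. -/
theorem convEnv_comp_gateaux (a b : ℝ) (hab : a < b) (u : ℝ → ℝ) (Λ : ℝ → ℝ)
    (hu : ContDiffOn ℝ 1 u (Set.Icc a b)) (hΛ : ContDiff ℝ 1 Λ)
    (hnf : NoFlat a b (fun y => Λ (u y)))
    (φ : ℝ → ℝ) (hφ : ContDiff ℝ (⊤ : ℕ∞) φ) (hsupp : tsupport φ ⊆ Set.Ioo a b) :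
    ∃ G : ℝ → ℝ, IsG a b u Λ φ G ∧
      Filter.Tendsto
        (fun s : ℝ => ∫ x in a..b,
          (convEnv a b (fun y => Λ (u y + s * φ y)) x
            - convEnv a b (fun y => Λ (u y)) x) / s)
        (𝓝[≠] (0:ℝ)) (𝓝 (∫ x in a..b, G x)) := by
  classical
  set f : ℝ → ℝ := fun y => Λ (u y) with hfdef
  set g : ℝ → ℝ := fun y => φ y * deriv Λ (u y) with hgdef
  have huc : ContinuousOn u (Icc a b) := hu.continuousOn
  have hfc : ContinuousOn f (Icc a b) := hΛ.continuous.comp_continuousOn huc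
  have hΛ' : Continuous (deriv Λ) := hΛ.continuous_deriv le_rfl
  have hgc : ContinuousOn g (Icc a b) :=
    (hφ.continuous.continuousOn).mul (hΛ'.comp_continuousOn huc)
  have hane : (Icc a b).Nonempty := ⟨a, left_mem_Icc.2 hab.le⟩
  -- bound for φ
  obtain ⟨tφ, htφ, hmaxφ⟩ := isCompact_Icc.exists_isMaxOn hane
    ((continuous_abs.comp hφ.continuous).continuousOn :
      ContinuousOn (fun t => |φ t|) (Icc a b))
  have hMle : ∀ t, |φ t| ≤ |φ tφ| := by
    intro t
    by_cases ht : t ∈ Icc a b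
    · exact hmaxφ ht
    · have hz : φ t = 0 := image_eq_zero_of_notMem_tsupport
        (fun hmem => ht (Ioo_subset_Icc_self (hsupp hmem)))
      rw [hz, abs_zero]
      exact abs_nonneg _
  -- bound for g
  obtain ⟨tg, htg, hmaxg⟩ := isCompact_Icc.exists_isMaxOn hane
    (hgc.abs : ContinuousOn (fun t => |g t|) (Icc a b))
  set C := |g tg| with hCdef
  have hCle : ∀ t ∈ Icc a b, |g t| ≤ C := fun t ht => hmaxg ht
  have hC0 : 0 ≤ C := abs_nonneg _
  -- Taylor estimate
  have htay : ∀ ε > (0:ℝ), ∃ δ > (0:ℝ), ∀ s : ℝ, |s| ≤ δ → ∀ t ∈ Icc a b,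
      |Λ (u t + s * φ t) - f t - s * g t| ≤ ε * |s| := by
    intro ε hε
    obtain ⟨δ, hδ, h⟩ := CEaux.taylor_bound hab huc hΛ hMle hε
    exact ⟨δ, hδ, fun s hs t ht => h s hs t ht⟩
  have hfsc : ∀ s : ℝ, ContinuousOn (fun t => Λ (u t + s * φ t)) (Icc a b) :=
    fun s => hΛ.continuous.comp_continuousOn
      (huc.add ((continuous_const.mul hφ.continuous).continuousOn))
  refine ⟨CEaux.Gfun a b f g, ⟨?_, ?_⟩, ?_⟩
  · -- clause 1
    intro x hx hfe
    have hcond : convEnv a b f x = f x := hfe.symm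
    simp only [CEaux.Gfun]
    rw [if_pos hcond]
  · -- clause 2
    intro c d hac hcd hdb hlt hc hd x hxI
    have hxmem : x ∈ Icc a b := ⟨le_trans hac hxI.1.le, le_trans hxI.2.le hdb⟩
    have hne : convEnv a b f x ≠ f x := (hlt x hxI).ne
    have hccontact : c ∈ CEaux.contact a b f := by
      rcases hc with rfl | hc
      · exact CEaux.left_mem_contact hab f
      · exact ⟨⟨hac, le_trans hcd.le hdb⟩, hc.symm⟩
    have hdcontact : d ∈ CEaux.contact a b f := by
      rcases hd with rfl | hd
      · exact CEaux.right_mem_contact hab f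
      · exact ⟨⟨le_trans hac hcd.le, hdb⟩, hd.symm⟩
    obtain ⟨hclal, hal, hlx⟩ := CEaux.lEnd_spec hab hfc hxmem hne
    obtain ⟨hcrar, hrb, hxr⟩ := CEaux.rEnd_spec hab hfc hxmem hne
    have hLeq : CEaux.lEnd a b f x = c := by
      rcases eq_or_lt_of_le (CEaux.lEnd_le' hccontact hac hxI.1.le) with h | h
      · exact h.symm
      · exfalso
        exact (hlt _ ⟨h, lt_trans hlx hxI.2⟩).ne hclal.2
    have hReq : CEaux.rEnd a b f x = d := by
      rcases eq_or_lt_of_le (CEaux.le_rEnd' hdcontact hxI.2.le hdb) with h | h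
      · exact h
      · exfalso
        exact (hlt _ ⟨lt_trans hxI.1 hxr, h⟩).ne hcrar.2
    simp only [CEaux.Gfun]
    rw [if_neg hne, hLeq, hReq]
  · -- the limit
    have key : ∀ x ∈ Icc a b, Tendsto
        (fun s => (convEnv a b (fun t => Λ (u t + s * φ t)) x - convEnv a b f x) / s)
        (𝓝[≠] (0:ℝ)) (𝓝 (CEaux.Gfun a b f g x)) := fun x hx =>
      CEaux.tendsto_quot_full hab hfc hgc hnf hCle hfsc htay hx
    simp only [intervalIntegral.integral_of_le hab.le]
    apply MeasureTheory.tendsto_integral_filter_of_dominated_convergence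
      (bound := fun _ => C + 1)
    · apply Filter.Eventually.of_forall
      intro s
      have hcont : ContinuousOn (fun x =>
          (convEnv a b (fun y => Λ (u y + s * φ y)) x - convEnv a b f x) / s)
          (Icc a b) :=
        ((CEaux.continuousOn_convEnv hab (hfsc s)).sub
          (CEaux.continuousOn_convEnv hab hfc)).div_const s
      exact (hcont.mono Ioc_subset_Icc_self).aestronglyMeasurable measurableSet_Ioc
    · obtain ⟨δ, hδ, hδ'⟩ := htay 1 one_pos
      have h1 : ∀ᶠ (s : ℝ) in 𝓝 0, |s| < δ := by
        have habs : Tendsto (fun s : ℝ => |s|) (𝓝 0) (𝓝 0) := by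
          simpa using continuous_abs.tendsto (0:ℝ)
        exact habs.eventually_lt_const hδ
      filter_upwards [h1.filter_mono nhdsWithin_le_nhds, self_mem_nhdsWithin]
        with s hsδ hsne
      have hsne' : (s:ℝ) ≠ 0 := hsne
      refine (ae_restrict_iff' measurableSet_Ioc).2 (Filter.Eventually.of_forall
        (fun x hx => ?_))
      have hxmem : x ∈ Icc a b := Ioc_subset_Icc_self hx
      have hbound : ∀ t ∈ Icc a b, |Λ (u t + s * φ t) - f t| ≤ |s| * (C + 1) := by
        intro t ht
        have h2 := hδ' s hsδ.le t ht
        have h3 := hCle t ht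
        have h4 : |Λ (u t + s * φ t) - f t| ≤
            |Λ (u t + s * φ t) - f t - s * g t| + |s * g t| := by
          have := abs_add_le (Λ (u t + s * φ t) - f t - s * g t) (s * g t)
          simpa using this
        rw [abs_mul] at h4
        nlinarith [abs_nonneg s]
      have hE := CEaux.convEnv_diff_le (hfsc s) hfc hbound hxmem
      rw [Real.norm_eq_abs, abs_div]
      rw [div_le_iff₀ (abs_pos.2 hsne')]
      calc |convEnv a b (fun y => Λ (u y + s * φ y)) x - convEnv a b f x|
          ≤ |s| * (C + 1) := hE
        _ = (C + 1) * |s| := by ring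
    · rw [MeasureTheory.integrable_const_iff]
      right
      exact isFiniteMeasure_restrict.2 measure_Ioc_lt_top.ne
    · filter_upwards [MeasureTheory.ae_restrict_mem measurableSet_Ioc] with x hx
      exact key x (Ioc_subset_Icc_self hx)
end

section
/- Let f, g : [a,b] → ℝ be continuous. Then ∫_a^b |Tf − Tg| dx ≤ ∫_a^b |f − g| dx, where T is the operator assigning to a continuous function the derivative of the convex envelope of its primitive. -/
open Set MeasureTheory Filter Topology

/-- The primitive `F(x) = ∫_a^x f(y) dy`. -/
noncomputable def primit (a : ℝ) (f : ℝ → ℝ) : ℝ → ℝ := fun x => ∫ y in a..x, f y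

/-- The operator `T`: `Tf = (F**)'`, the derivative of the convex envelope of the
primitive `F` of `f`. -/
noncomputable def Tcv (a b : ℝ) (f : ℝ → ℝ) : ℝ → ℝ :=
  derivWithin (convEnv a b (primit a f)) (Set.Icc a b)

/-!
`T` preserves integrals and order, which gives the `L¹`-contraction (Crandall–Tartar): with
`h = max f g`, a.e. `|Tf - Tg| ≤ 2 Th - Tf - Tg`, whose integral is `2 ∫ h - ∫ f - ∫ g = ∫ |f - g|`.

For `K`-Lipschitz `F`, every point of `F**` carries a supporting line of `F` of slope at most `K`,
so `F**` is `K`-Lipschitz, hence absolutely continuous, and `∫ Tf = F b - F a = ∫ f` since `F**`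
agrees with `F` at the endpoints. Where `F**` is differentiable its tangent line is the only
supporting line of `F`; if `f ≤ g` then `G - F` is nondecreasing, and this orders the slopes of
the tangent lines of `F**` and `G**`.
-/

open scoped NNReal

section ConvexEnvelope

variable {a b x : ℝ} {F : ℝ → ℝ}

lemma convEnv_le_combination (hF : BddBelow (F '' Icc a b)) {lam x₀ x₁ : ℝ}
    (hlam : lam ∈ Icc (0 : ℝ) 1) (hx₀ : x₀ ∈ Icc a b) (hx₁ : x₁ ∈ Icc a b) :
    convEnv a b F ((1 - lam) * x₀ + lam * x₁) ≤ (1 - lam) * F x₀ + lam * F x₁ := by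
  obtain ⟨m, hm⟩ := hF
  refine csInf_le ⟨m, ?_⟩ ⟨lam, x₀, x₁, hlam, hx₀, hx₁, rfl, rfl⟩
  rintro y ⟨lam', y₀, y₁, ⟨h0, h1⟩, hy₀, hy₁, -, rfl⟩
  have := hm (mem_image_of_mem F hy₀)
  have := hm (mem_image_of_mem F hy₁)
  nlinarith

lemma convEnv_le (hF : BddBelow (F '' Icc a b)) (hx : x ∈ Icc a b) : convEnv a b F x ≤ F x := by
  simpa using convEnv_le_combination hF (lam := 0) (by simp) hx hx

lemma convEnv_mul_le_chord_s5 (hF : BddBelow (F '' Icc a b)) {c d : ℝ} (hc : c ∈ Icc a b)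
    (hd : d ∈ Icc a b) (hcx : c ≤ x) (hxd : x ≤ d) (hcd : c < d) :
    convEnv a b F x * (d - c) ≤ F c * (d - x) + F d * (x - c) := by
  have hdc : 0 < d - c := sub_pos.2 hcd
  have hlam : (x - c) / (d - c) ∈ Icc (0 : ℝ) 1 :=
    ⟨div_nonneg (by linarith) hdc.le, (div_le_one hdc).2 (by linarith)⟩
  have hx : (1 - (x - c) / (d - c)) * c + (x - c) / (d - c) * d = x := by
    field_simp; ring
  have h := convEnv_le_combination hF hlam hc hd
  rw [hx] at h
  calc convEnv a b F x * (d - c)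
      ≤ ((1 - (x - c) / (d - c)) * F c + (x - c) / (d - c) * F d) * (d - c) :=
        mul_le_mul_of_nonneg_right h hdc.le
    _ = F c * (d - x) + F d * (x - c) := by field_simp; ring

lemma le_convEnv_of_forall_le {x₀ y₀ p : ℝ} (h : ∀ t ∈ Icc a b, y₀ + p * (t - x₀) ≤ F t)
    (hx : x ∈ Icc a b) : y₀ + p * (x - x₀) ≤ convEnv a b F x := by
  refine le_csInf ⟨F x, 0, x, x, by simp, hx, hx, by ring, by ring⟩ ?_
  rintro y ⟨lam, x₁, x₂, ⟨h0, h1⟩, hx₁, hx₂, rfl, rfl⟩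
  have := h x₁ hx₁
  have := h x₂ hx₂
  nlinarith

lemma convEnv_eq_of_mem_extremePoints (hx : x ∈ (Icc a b).extremePoints ℝ) :
    convEnv a b F x = F x := by
  obtain ⟨hxI, hext⟩ := mem_extremePoints.1 hx
  refine IsLeast.csInf_eq ⟨⟨0, x, x, by simp, hxI, hxI, by ring, by ring⟩, ?_⟩
  rintro y ⟨lam, x₀, x₁, ⟨h0, h1⟩, hx₀, hx₁, hc, rfl⟩
  rcases h0.eq_or_lt with rfl | h0
  · simp_all
  rcases h1.eq_or_lt with rfl | h1
  · simp_all
  obtain ⟨rfl, rfl⟩ := hext x₀ hx₀ x₁ hx₁ ⟨1 - lam, lam, by linarith, h0, by ring, hc⟩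
  linarith

variable {K : ℝ≥0}

/-- The slope is squeezed between the slopes from `F` on the left of `x` to `(x, F** x)` and
those from `(x, F** x)` to `F` on the right; `convEnv_mul_le_chord` says that the former are
below the latter. -/
lemma exists_supporting_slope (hF : LipschitzOnWith K F (Icc a b)) (hx : x ∈ Icc a b) :
    ∃ p : ℝ, |p| ≤ K ∧ ∀ t ∈ Icc a b, convEnv a b F x + p * (t - x) ≤ F t := by
  have hbdd := isCompact_Icc.bddBelow_image hF.continuousOn
  set e := convEnv a b F x
  have he : e ≤ F x := convEnv_le hbdd hx
  have hIco : ∀ {c}, c ∈ Ico a x → c ∈ Icc a b := fun hc => ⟨hc.1, hc.2.le.trans hx.2⟩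
  have hIoc : ∀ {d}, d ∈ Ioc x b → d ∈ Icc a b := fun hd => ⟨hx.1.trans hd.1.le, hd.2⟩
  have hleft : ∀ c ∈ Ico a x, (e - F c) / (x - c) ≤ K := fun c hc => by
    have := hF.le_add_mul hx (hIco hc)
    rw [Real.dist_eq, abs_of_pos (sub_pos.2 hc.2)] at this
    rw [div_le_iff₀ (sub_pos.2 hc.2)]; linarith
  have hright : ∀ d ∈ Ioc x b, -(K : ℝ) ≤ (F d - e) / (d - x) := fun d hd => by
    have := hF.le_add_mul hx (hIoc hd)
    rw [Real.dist_eq, abs_sub_comm, abs_of_pos (sub_pos.2 hd.1)] at this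
    rw [le_div_iff₀ (sub_pos.2 hd.1)]; linarith
  have hchord : ∀ c ∈ Ico a x, ∀ d ∈ Ioc x b, (e - F c) / (x - c) ≤ (F d - e) / (d - x) :=
    fun c hc d hd => by
      have := convEnv_mul_le_chord_s5 hbdd (hIco hc) (hIoc hd) hc.2.le hd.1.le (hc.2.trans hd.1)
      rw [div_le_div_iff₀ (sub_pos.2 hc.2) (sub_pos.2 hd.1)]; linarith
  set S := insert (-(K : ℝ)) ((fun c => (e - F c) / (x - c)) '' Ico a x)
  have hSK : ∀ s ∈ S, s ≤ K := by
    rintro s (rfl | ⟨c, hc, rfl⟩)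
    exacts [neg_le_self K.2, hleft c hc]
  have hS : BddAbove S := ⟨K, hSK⟩
  have hle : ∀ d ∈ Ioc x b, sSup S ≤ (F d - e) / (d - x) := fun d hd =>
    csSup_le (insert_nonempty _ _) <| by
      rintro s (rfl | ⟨c, hc, rfl⟩)
      exacts [hright d hd, hchord c hc d hd]
  refine ⟨sSup S, abs_le.2 ⟨le_csSup hS (mem_insert _ _), csSup_le (insert_nonempty _ _) hSK⟩, ?_⟩
  intro t ht
  rcases lt_trichotomy t x with htx | rfl | hxt
  · have := le_csSup hS (mem_insert_of_mem _ ⟨t, ⟨ht.1, htx⟩, rfl⟩)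
    rw [div_le_iff₀ (sub_pos.2 htx)] at this
    linarith
  · simpa using he
  · have := hle t ⟨hxt, ht.2⟩
    rw [le_div_iff₀ (sub_pos.2 hxt)] at this
    linarith

lemma lipschitzOnWith_convEnv (hF : LipschitzOnWith K F (Icc a b)) :
    LipschitzOnWith K (convEnv a b F) (Icc a b) := by
  refine LipschitzOnWith.of_le_add_mul K fun x hx y hy => ?_
  obtain ⟨p, hpK, hp⟩ := exists_supporting_slope hF hx
  have hsupp := le_convEnv_of_forall_le hp hy
  have hslope : -(p * (y - x)) ≤ K * dist x y := by
    rw [Real.dist_eq, abs_sub_comm]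
    calc -(p * (y - x)) ≤ |p| * |y - x| := by rw [← abs_mul]; exact neg_le_abs _
      _ ≤ K * |y - x| := mul_le_mul_of_nonneg_right hpK (abs_nonneg _)
  linarith

lemma eq_of_hasDerivAt_convEnv {p q : ℝ} (hx : x ∈ Ioo a b)
    (hq : HasDerivAt (convEnv a b F) q x)
    (hp : ∀ t ∈ Icc a b, convEnv a b F x + p * (t - x) ≤ F t) : q = p := by
  set E := convEnv a b F
  have hmin : IsLocalMin (fun t => E t - (E x + p * (t - x))) x := by
    filter_upwards [Icc_mem_nhds hx.1 hx.2] with t ht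
    have := le_convEnv_of_forall_le hp ht
    simp only [sub_self, mul_zero, add_zero]
    linarith
  have hderiv : HasDerivAt (fun t => E t - (E x + p * (t - x))) (q - p) x := by
    have hline : HasDerivAt (fun t => E x + p * (t - x)) p x := by
      simpa using ((hasDerivAt_id x).sub_const x).const_mul p |>.const_add (E x)
    exact hq.sub hline
  linarith [hmin.hasDerivAt_eq_zero hderiv]

lemma convEnv_add_mul_le_of_hasDerivAt {q : ℝ} (hF : LipschitzOnWith K F (Icc a b))
    (hx : x ∈ Ioo a b) (hq : HasDerivAt (convEnv a b F) q x) :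
    ∀ t ∈ Icc a b, convEnv a b F x + q * (t - x) ≤ F t := by
  obtain ⟨p, -, hp⟩ := exists_supporting_slope hF (Ioo_subset_Icc_self hx)
  rwa [eq_of_hasDerivAt_convEnv hx hq hp]

lemma exists_lt_convEnv_add_mul_of_hasDerivAt {p q : ℝ} (hx : x ∈ Ioo a b)
    (hq : HasDerivAt (convEnv a b F) q x) (hpq : p ≠ q) :
    ∃ t ∈ Icc a b, F t < convEnv a b F x + p * (t - x) := by
  by_contra! h
  exact hpq (eq_of_hasDerivAt_convEnv hx hq h).symm

end ConvexEnvelope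

/-- The tangent line of `F**` at `x`, tilted down by `δ`, passes above `F` at some `t`, necessarily
`t < x`; tilted up by `δ`, the tangent line of `G**` passes above `G` at some `s > x`. Comparing
`G - F` at `t` and `s` with the tangent lines gives `p < q + δ`. -/
theorem deriv_convEnv_le_of_monotoneOn_sub {a b x p q : ℝ} {F G : ℝ → ℝ} {KF KG : ℝ≥0}
    (hF : LipschitzOnWith KF F (Icc a b)) (hG : LipschitzOnWith KG G (Icc a b))
    (hGF : MonotoneOn (G - F) (Icc a b)) (hx : x ∈ Ioo a b)
    (hp : HasDerivAt (convEnv a b F) p x) (hq : HasDerivAt (convEnv a b G) q x) : p ≤ q := by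
  refine le_of_forall_pos_lt_add fun δ hδ => ?_
  have hFtan := convEnv_add_mul_le_of_hasDerivAt hF hx hp
  have hGtan := convEnv_add_mul_le_of_hasDerivAt hG hx hq
  obtain ⟨t, ht, hFt⟩ := exists_lt_convEnv_add_mul_of_hasDerivAt hx hp (sub_lt_self p hδ).ne
  obtain ⟨s, hs, hGs⟩ :=
    exists_lt_convEnv_add_mul_of_hasDerivAt hx hq (lt_add_of_pos_right q hδ).ne'
  have htx : t < x := by nlinarith [hFtan t ht]
  have hxs : x < s := by nlinarith [hGtan s hs]
  have hts := hGF ht hs (htx.trans hxs).le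
  simp only [Pi.sub_apply] at hts
  nlinarith [hGtan t ht, hFtan s hs]
section Primitive

variable {a b : ℝ} {f g : ℝ → ℝ}

lemma primit_sub_primit (hf : ContinuousOn f (Icc a b)) {u v : ℝ} (hu : u ∈ Icc a b)
    (hv : v ∈ Icc a b) : primit a f v - primit a f u = ∫ y in u..v, f y := by
  have ha : a ∈ Icc a b := ⟨le_rfl, hu.1.trans hu.2⟩
  exact intervalIntegral.integral_interval_sub_left
    (hf.mono (uIcc_subset_Icc ha hv)).intervalIntegrable
    (hf.mono (uIcc_subset_Icc ha hu)).intervalIntegrable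

lemma exists_lipschitzOnWith_primit (hf : ContinuousOn f (Icc a b)) :
    ∃ K, LipschitzOnWith K (primit a f) (Icc a b) := by
  obtain ⟨C, hC⟩ := isCompact_Icc.exists_bound_of_continuousOn hf
  refine ⟨_, LipschitzOnWith.of_le_add_mul' C fun u hu v hv => ?_⟩
  have hint : ‖∫ y in v..u, f y‖ ≤ C * |u - v| :=
    intervalIntegral.norm_integral_le_of_norm_le_const fun y hy =>
      hC y (uIcc_subset_Icc hv hu (uIoc_subset_uIcc hy))
  rw [Real.dist_eq, ← sub_le_iff_le_add', primit_sub_primit hf hv hu]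
  exact (le_abs_self _).trans hint

lemma monotoneOn_primit_sub_primit (hf : ContinuousOn f (Icc a b))
    (hg : ContinuousOn g (Icc a b)) (hfg : ∀ t ∈ Icc a b, f t ≤ g t) :
    MonotoneOn (primit a g - primit a f) (Icc a b) := by
  intro u hu v hv huv
  have hsub : uIcc u v ⊆ Icc a b := uIcc_subset_Icc hu hv
  have := intervalIntegral.integral_mono_on (μ := volume) huv (hf.mono hsub).intervalIntegrable
    (hg.mono hsub).intervalIntegrable fun t ht => hfg t (Icc_subset_Icc hu.1 hv.2 ht)
  simp only [Pi.sub_apply]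
  linarith [primit_sub_primit hf hu hv, primit_sub_primit hg hu hv]

end Primitive

section Tcv

variable {a b : ℝ} {f g : ℝ → ℝ}

lemma Tcv_eqOn_deriv :
    EqOn (Tcv a b f) (deriv (convEnv a b (primit a f))) (Ioo a b) := fun _ hx =>
  derivWithin_of_mem_nhds (Icc_mem_nhds hx.1 hx.2)

lemma absolutelyContinuousOnInterval_convEnv_primit (hab : a ≤ b)
    (hf : ContinuousOn f (Icc a b)) :
    AbsolutelyContinuousOnInterval (convEnv a b (primit a f)) a b := by
  obtain ⟨K, hK⟩ := exists_lipschitzOnWith_primit hf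
  exact (uIcc_of_le hab ▸ lipschitzOnWith_convEnv hK).absolutelyContinuousOnInterval

lemma intervalIntegrable_Tcv (hab : a ≤ b) (hf : ContinuousOn f (Icc a b)) :
    IntervalIntegrable (Tcv a b f) volume a b :=
  (absolutelyContinuousOnInterval_convEnv_primit hab hf).intervalIntegrable_deriv.congr_uIoo
    (uIoo_of_le hab ▸ Tcv_eqOn_deriv.symm)

theorem integral_Tcv (hab : a ≤ b) (hf : ContinuousOn f (Icc a b)) :
    ∫ x in a..b, Tcv a b f x = ∫ x in a..b, f x := by
  rw [intervalIntegral.integral_congr_Ioo_of_le hab Tcv_eqOn_deriv,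
    (absolutelyContinuousOnInterval_convEnv_primit hab hf).integral_deriv_eq_sub,
    convEnv_eq_of_mem_extremePoints (by simp [hab]),
    convEnv_eq_of_mem_extremePoints (by simp [hab])]
  simp [primit]

lemma ae_hasDerivAt_Tcv (hab : a ≤ b) (hf : ContinuousOn f (Icc a b)) :
    ∀ᵐ x, x ∈ Ioo a b → HasDerivAt (convEnv a b (primit a f)) (Tcv a b f x) x := by
  filter_upwards [(absolutelyContinuousOnInterval_convEnv_primit hab hf).ae_differentiableAt]
    with x hdiff hx
  rw [Tcv_eqOn_deriv hx]
  exact (hdiff (uIcc_of_le hab ▸ Ioo_subset_Icc_self hx)).hasDerivAt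

theorem Tcv_le_Tcv_ae (hab : a ≤ b) (hf : ContinuousOn f (Icc a b))
    (hg : ContinuousOn g (Icc a b)) (hfg : ∀ t ∈ Icc a b, f t ≤ g t) :
    ∀ᵐ x ∂volume.restrict (Icc a b), Tcv a b f x ≤ Tcv a b g x := by
  obtain ⟨Kf, hKf⟩ := exists_lipschitzOnWith_primit hf
  obtain ⟨Kg, hKg⟩ := exists_lipschitzOnWith_primit hg
  rw [Measure.restrict_congr_set Ioo_ae_eq_Icc.symm, ae_restrict_iff' measurableSet_Ioo]
  filter_upwards [ae_hasDerivAt_Tcv hab hf, ae_hasDerivAt_Tcv hab hg] with x hxf hxg hx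
  exact deriv_convEnv_le_of_monotoneOn_sub hKf hKg (monotoneOn_primit_sub_primit hf hg hfg) hx
    (hxf hx) (hxg hx)

end Tcv

lemma intervalIntegral.integral_two_mul_sub_sub {a b : ℝ} {u v w : ℝ → ℝ}
    (hu : IntervalIntegrable u volume a b) (hv : IntervalIntegrable v volume a b)
    (hw : IntervalIntegrable w volume a b) :
    ∫ x in a..b, (2 * w x - u x - v x) =
      2 * (∫ x in a..b, w x) - (∫ x in a..b, u x) - ∫ x in a..b, v x := by
  rw [intervalIntegral.integral_sub ((hw.const_mul 2).sub hu) hv,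
    intervalIntegral.integral_sub (hw.const_mul 2) hu, intervalIntegral.integral_const_mul]

/-- `∫_a^b |Tf - Tg| ≤ ∫_a^b |f - g|` for continuous `f, g`. -/
theorem Tcv_L1_contraction_continuous (a b : ℝ) (hab : a < b) (f g : ℝ → ℝ)
    (hf : ContinuousOn f (Set.Icc a b)) (hg : ContinuousOn g (Set.Icc a b)) :
    (∫ x in a..b, |Tcv a b f x - Tcv a b g x|) ≤ ∫ x in a..b, |f x - g x| := by
  set h := fun x => max (f x) (g x)
  have hh : ContinuousOn h (Icc a b) := hf.sup hg
  have hTf := intervalIntegrable_Tcv hab.le hf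
  have hTg := intervalIntegrable_Tcv hab.le hg
  have hTh := intervalIntegrable_Tcv hab.le hh
  have hfh := Tcv_le_Tcv_ae hab.le hf hh fun t _ => le_max_left (f t) (g t)
  have hgh := Tcv_le_Tcv_ae hab.le hg hh fun t _ => le_max_right (f t) (g t)
  calc (∫ x in a..b, |Tcv a b f x - Tcv a b g x|)
      ≤ ∫ x in a..b, (2 * Tcv a b h x - Tcv a b f x - Tcv a b g x) := by
        refine intervalIntegral.integral_mono_ae_restrict hab.le (hTf.sub hTg).abs
          (((hTh.const_mul 2).sub hTf).sub hTg) ?_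
        filter_upwards [hfh, hgh] with x hfx hgx
        exact abs_sub_le_iff.2 ⟨by linarith, by linarith⟩
    _ = 2 * (∫ x in a..b, h x) - (∫ x in a..b, f x) - ∫ x in a..b, g x := by
        rw [intervalIntegral.integral_two_mul_sub_sub hTf hTg hTh, integral_Tcv hab.le hf,
          integral_Tcv hab.le hg, integral_Tcv hab.le hh]
    _ = ∫ x in a..b, |f x - g x| := by
        rw [← intervalIntegral.integral_two_mul_sub_sub (hf.intervalIntegrable_of_Icc hab.le)
          (hg.intervalIntegrable_of_Icc hab.le) (hh.intervalIntegrable_of_Icc hab.le)]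
        refine intervalIntegral.integral_congr fun x _ => ?_
        rcases le_total (f x) (g x) with hfg | hgf
        · simp only [h, max_eq_right hfg, abs_of_nonpos (sub_nonpos.2 hfg)]; ring
        · simp only [h, max_eq_left hgf, abs_of_nonneg (sub_nonneg.2 hgf)]; ring
end
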